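/- arXiv:1102.0832 — 8 statements merged into one kernel-verified Lean document; each statement's English description precedes it below -/
import Mathlib

section
/- Let n ≥ 1, let U ⊆ ℝ^d be open, let f_1, …, f_n : U → ℝ be functions differentiable at a point x ∈ U, and set g = (Σ_{k=1}^n f_k²)^{1/2}. If g(x) > 0, then g is differentiable at x and Σ_{k=1}^n ‖∇f_k(x)‖² − ‖∇g(x)‖² = g(x)^{-2} · Σ_{1 ≤ j < k ≤ n} ‖f_j(x)∇f_k(x) − f_k(x)∇f_j(x)‖². In particular ‖∇g(x)‖² ≤ Σ_{k=1}^n ‖∇f_k(x)‖², with equality if and only if f_j(x)∇f_k(x) − f_k(x)∇f_j(x) = 0 for all j ≠ k. -/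
/-! The gradient of `g = √(∑ fₖ²)` is `g⁻¹ ∑ fₖ ∇fₖ`, so `g² ‖∇g‖² = ‖∑ fₖ ∇fₖ‖²`, and
Lagrange's identity `(∑ aₖ²)(∑ ‖vₖ‖²) - ‖∑ aₖ vₖ‖² = ∑_{j<k} ‖aⱼ vₖ - aₖ vⱼ‖²` in an inner product
space, applied with `aₖ = fₖ(x)` and `vₖ = ∇fₖ(x)`, gives the identity. Its right-hand side is a
sum of squares, whence the inequality and its equality case. -/

open Finset InnerProductSpace

section PairSums

variable {ι : Type*} [Fintype ι] [LinearOrder ι]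

theorem sum_sum_eq_sum_sum_ite_lt_add_swap {M : Type*} [AddCommMonoid M] (T : ι → ι → M)
    (hdiag : ∀ j, T j j = 0) :
    ∑ j, ∑ k, T j k = ∑ j, ∑ k, if j < k then T j k + T k j else 0 := by
  have hsplit : ∀ j k, T j k = (if j < k then T j k else 0) + if k < j then T j k else 0 := by
    intro j k
    rcases lt_trichotomy j k with h | rfl | h
    · simp [h, h.not_gt]
    · simp [hdiag]
    · simp [h, h.not_gt]
  calc ∑ j, ∑ k, T j k
      = (∑ j, ∑ k, if j < k then T j k else 0) + ∑ j, ∑ k, if k < j then T j k else 0 := by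
        simp only [← sum_add_distrib, ← hsplit]
    _ = (∑ j, ∑ k, if j < k then T j k else 0) + ∑ j, ∑ k, if j < k then T k j else 0 := by
        rw [sum_comm (f := fun j k => if k < j then T j k else 0)]
    _ = ∑ j, ∑ k, if j < k then T j k + T k j else 0 := by
        simp only [← sum_add_distrib, ite_add_zero]

variable {F : Type*} [NormedAddCommGroup F] [InnerProductSpace ℝ F]

theorem sum_sq_mul_sum_norm_sq_sub_norm_sum_smul_sq (a : ι → ℝ) (v : ι → F) :
    (∑ k, a k ^ 2) * (∑ k, ‖v k‖ ^ 2) - ‖∑ k, a k • v k‖ ^ 2 =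
      ∑ j, ∑ k, if j < k then ‖a j • v k - a k • v j‖ ^ 2 else 0 := by
  have hnorm : ‖∑ k, a k • v k‖ ^ 2 = ∑ j, ∑ k, a j * a k * ⟪v j, v k⟫_ℝ := by
    simp only [← real_inner_self_eq_norm_sq, sum_inner, inner_sum, real_inner_smul_left,
      real_inner_smul_right, mul_assoc]
    exact sum_congr rfl fun j _ => sum_congr rfl fun k _ => by
      rw [real_inner_comm]
  have hpair : ∀ j k, (a j ^ 2 * ‖v k‖ ^ 2 - a j * a k * ⟪v j, v k⟫_ℝ) +
      (a k ^ 2 * ‖v j‖ ^ 2 - a k * a j * ⟪v k, v j⟫_ℝ) = ‖a j • v k - a k • v j‖ ^ 2 := by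
    intro j k
    rw [norm_sub_sq_real, real_inner_smul_left, real_inner_smul_right, norm_smul, norm_smul,
      mul_pow, mul_pow, Real.norm_eq_abs, Real.norm_eq_abs, sq_abs, sq_abs,
      real_inner_comm (v k) (v j)]
    ring
  calc (∑ k, a k ^ 2) * (∑ k, ‖v k‖ ^ 2) - ‖∑ k, a k • v k‖ ^ 2
      = ∑ j, ∑ k, (a j ^ 2 * ‖v k‖ ^ 2 - a j * a k * ⟪v j, v k⟫_ℝ) := by
        simp only [sum_mul_sum, hnorm, ← sum_sub_distrib]
    _ = ∑ j, ∑ k, if j < k then ‖a j • v k - a k • v j‖ ^ 2 else 0 := by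
        rw [sum_sum_eq_sum_sum_ite_lt_add_swap _ fun j => by rw [real_inner_self_eq_norm_sq]; ring]
        simp only [hpair]

theorem sum_sum_ite_lt_norm_sq_eq_zero_iff (a : ι → ℝ) (v : ι → F) :
    (∑ j, ∑ k, if j < k then ‖a j • v k - a k • v j‖ ^ 2 else 0) = 0 ↔
      ∀ j k, j ≠ k → a j • v k - a k • v j = 0 := by
  have hlt : (∑ j, ∑ k, if j < k then ‖a j • v k - a k • v j‖ ^ 2 else 0) = 0 ↔
      ∀ j k, j < k → a j • v k - a k • v j = 0 := by
    rw [sum_eq_zero_iff_of_nonneg fun _ _ => sum_nonneg fun _ _ => by positivity]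
    refine forall_congr' fun j => ?_
    rw [sum_eq_zero_iff_of_nonneg fun _ _ => by positivity]
    simp only [mem_univ, true_implies, ite_eq_right_iff, pow_eq_zero_iff two_ne_zero,
      norm_eq_zero]
  rw [hlt]
  refine ⟨fun h j k hjk => ?_, fun h j k hjk => h j k hjk.ne⟩
  rcases hjk.lt_or_gt with hjk | hkj
  · exact h j k hjk
  · rw [← neg_sub, h k j hkj, neg_zero]

end PairSums

theorem HasGradientAt.sqrt_sum_sq {ι F : Type*} [Fintype ι] [NormedAddCommGroup F]
    [InnerProductSpace ℝ F] [CompleteSpace F] {f : ι → F → ℝ} {v : ι → F} {x : F}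
    (hf : ∀ k, HasGradientAt (f k) (v k) x) (hx : ∑ k, f k x ^ 2 ≠ 0) :
    HasGradientAt (fun y => √(∑ k, f k y ^ 2)) ((√(∑ k, f k x ^ 2))⁻¹ • ∑ k, f k x • v k) x := by
  rw [hasGradientAt_iff_hasFDerivAt]
  have hS := HasFDerivAt.fun_sum (u := univ) fun k _ =>
    (hasGradientAt_iff_hasFDerivAt.1 (hf k)).pow 2
  refine (hS.sqrt hx).congr_fderiv ?_
  rw [map_smul, map_sum, smul_sum, smul_sum]
  refine sum_congr rfl fun k _ => ?_
  rw [map_smul, smul_smul, smul_smul]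
  congr 1
  field_simp
  norm_num

theorem gradient_sq_sum_redistribution_single_general {d n : ℕ}
    (f : Fin n → EuclideanSpace ℝ (Fin d) → ℝ)
    (x : EuclideanSpace ℝ (Fin d))
    (hdiff : ∀ k, DifferentiableAt ℝ (f k) x)
    (g : EuclideanSpace ℝ (Fin d) → ℝ)
    (hg : g = fun y => Real.sqrt (∑ k, (f k y) ^ 2))
    (hgx : 0 < g x) :
    DifferentiableAt ℝ g x ∧
    (∑ k, ‖gradient (f k) x‖ ^ 2) - ‖gradient g x‖ ^ 2 =
      ((g x) ^ 2)⁻¹ *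
        ∑ j, ∑ k, (if j < k then
          ‖f j x • gradient (f k) x - f k x • gradient (f j) x‖ ^ 2 else 0) ∧
    ‖gradient g x‖ ^ 2 ≤ ∑ k, ‖gradient (f k) x‖ ^ 2 ∧
    (‖gradient g x‖ ^ 2 = ∑ k, ‖gradient (f k) x‖ ^ 2 ↔
      ∀ j k, j ≠ k → f j x • gradient (f k) x - f k x • gradient (f j) x = 0) := by
  have hgx_sq : g x ^ 2 = ∑ k, f k x ^ 2 := by
    rw [hg, Real.sq_sqrt (sum_nonneg fun k _ => sq_nonneg _)]
  have hgrad : HasGradientAt g ((g x)⁻¹ • ∑ k, f k x • gradient (f k) x) x := by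
    subst hg
    exact .sqrt_sum_sq (fun k => (hdiff k).hasGradientAt) (hgx_sq ▸ (pow_pos hgx 2).ne')
  have hdefect : (∑ k, ‖gradient (f k) x‖ ^ 2) - ‖gradient g x‖ ^ 2 =
      ((g x) ^ 2)⁻¹ * ∑ j, ∑ k,
        (if j < k then ‖f j x • gradient (f k) x - f k x • gradient (f j) x‖ ^ 2 else 0) := by
    rw [← sum_sq_mul_sum_norm_sq_sub_norm_sum_smul_sq, ← hgx_sq, hgrad.gradient, norm_smul,
      mul_pow, Real.norm_eq_abs, sq_abs, inv_pow]
    field_simp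
  refine ⟨hgrad.differentiableAt, hdefect, sub_nonneg.1 (hdefect ▸ by positivity), ?_⟩
  rw [eq_comm, ← sub_eq_zero, hdefect, mul_eq_zero, inv_eq_zero, pow_eq_zero_iff two_ne_zero,
    or_iff_right hgx.ne', sum_sum_ite_lt_norm_sq_eq_zero_iff]

/-- Let `f₁, …, fₙ : ℝ^d → ℝ` (n ≥ 1) be differentiable at `x ∈ U` (U open), and
`g = (Σ fₖ²)^{1/2}`. If `g(x) > 0` then `g` is differentiable at `x` and
`Σ ‖∇fₖ(x)‖² − ‖∇g(x)‖² = g(x)⁻² Σ_{j<k} ‖fⱼ(x)∇fₖ(x) − fₖ(x)∇fⱼ(x)‖²`;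
in particular `‖∇g(x)‖² ≤ Σ ‖∇fₖ(x)‖²`, with equality iff
`fⱼ(x)∇fₖ(x) − fₖ(x)∇fⱼ(x) = 0` for all `j ≠ k`. -/
theorem gradient_sq_sum_redistribution_single {d n : ℕ} (hn : 1 ≤ n)
    (U : Set (EuclideanSpace ℝ (Fin d))) (hU : IsOpen U)
    (f : Fin n → EuclideanSpace ℝ (Fin d) → ℝ)
    (x : EuclideanSpace ℝ (Fin d)) (hx : x ∈ U)
    (hdiff : ∀ k, DifferentiableAt ℝ (f k) x)
    (g : EuclideanSpace ℝ (Fin d) → ℝ)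
    (hg : g = fun y => Real.sqrt (∑ k, (f k y) ^ 2))
    (hgx : 0 < g x) :
    DifferentiableAt ℝ g x ∧
    (∑ k, ‖gradient (f k) x‖ ^ 2) - ‖gradient g x‖ ^ 2 =
      ((g x) ^ 2)⁻¹ *
        ∑ j, ∑ k, (if j < k then
          ‖f j x • gradient (f k) x - f k x • gradient (f j) x‖ ^ 2 else 0) ∧
    ‖gradient g x‖ ^ 2 ≤ ∑ k, ‖gradient (f k) x‖ ^ 2 ∧
    (‖gradient g x‖ ^ 2 = ∑ k, ‖gradient (f k) x‖ ^ 2 ↔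
      ∀ j k, j ≠ k → f j x • gradient (f k) x - f k x • gradient (f j) x = 0) :=
  gradient_sq_sum_redistribution_single_general f x hdiff g hg hgx
end

section
/- Let n, m ≥ 1, let U ⊆ ℝ^d be open, and let f_1, …, f_n : U → ℝ be nonnegative functions. Let a_{ℓk} ≥ 0 (1 ≤ ℓ ≤ m, 1 ≤ k ≤ n) be constants with Σ_{ℓ=1}^m a_{ℓk} = 1 for each k, and define the mass redistribution g_ℓ = (Σ_{k=1}^n a_{ℓk} f_k²)^{1/2}. Then: (1) Σ_{ℓ=1}^m g_ℓ² = Σ_{k=1}^n f_k² on U; (2) if each f_k is differentiable at a point x ∈ U and g_ℓ(x) > 0 for every ℓ, then each g_ℓ is differentiable at x and Σ_{ℓ=1}^m ‖∇g_ℓ(x)‖² ≤ Σ_{k=1}^n ‖∇f_k(x)‖², with equality if and only if f_j(x)∇f_k(x) − f_k(x)∇f_j(x) = 0 for every pair j ≠ k such that a_{ℓj}a_{ℓk} ≠ 0 for at least one ℓ. -/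
/-! The chain rule gives `∇gₗ = Sₗ^{-1/2} ∑ₖ aₗₖ fₖ ∇fₖ` with `Sₗ = ∑ₖ aₗₖ fₖ²`, and the weighted
Lagrange identity turns `Sₗ ∑ₖ aₗₖ ‖∇fₖ‖² - ‖∑ₖ aₗₖ fₖ ∇fₖ‖²` into
`½ ∑ⱼ ∑ₖ aₗⱼ aₗₖ ‖fⱼ ∇fₖ - fₖ ∇fⱼ‖²`. Summing over `ℓ` with `∑ₗ aₗₖ = 1`, the loss of kinetic
energy `∑ₖ ‖∇fₖ‖² - ∑ₗ ‖∇gₗ‖²` is a sum of these nonnegative defects divided by `2 Sₗ`, and it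
vanishes exactly when every defect term does. -/

open Finset InnerProductSpace

section Redistribution

variable {ι κ E : Type*} [Fintype ι] [Fintype κ] [NormedAddCommGroup E] [InnerProductSpace ℝ E]

theorem sum_sum_mul_eq_sum_of_sum_eq_one {a : κ → ι → ℝ} (ha : ∀ k, ∑ ℓ, a ℓ k = 1)
    (c : ι → ℝ) : ∑ ℓ, ∑ k, a ℓ k * c k = ∑ k, c k := by
  rw [sum_comm]
  simp_rw [← sum_mul, ha, one_mul]

def lagrangeDefect (a c : ι → ℝ) (F : ι → E) : ℝ :=
  ∑ j, ∑ k, a j * a k * ‖c j • F k - c k • F j‖ ^ 2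

theorem lagrangeDefect_nonneg {a : ι → ℝ} (ha : ∀ k, 0 ≤ a k) (c : ι → ℝ) (F : ι → E) :
    0 ≤ lagrangeDefect a c F :=
  sum_nonneg fun j _ => sum_nonneg fun k _ => by have := ha j; have := ha k; positivity

theorem lagrangeDefect_eq_zero_iff {a : ι → ℝ} (ha : ∀ k, 0 ≤ a k) (c : ι → ℝ) (F : ι → E) :
    lagrangeDefect a c F = 0 ↔ ∀ j k, a j * a k ≠ 0 → c j • F k - c k • F j = 0 := by
  have hterm : ∀ j k, 0 ≤ a j * a k * ‖c j • F k - c k • F j‖ ^ 2 := fun j k => by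
    have := ha j; have := ha k; positivity
  simp only [lagrangeDefect,
    sum_eq_zero_iff_of_nonneg (fun j _ => sum_nonneg fun k _ => hterm j k),
    sum_eq_zero_iff_of_nonneg (fun k _ => hterm _ k), mem_univ, true_imp_iff, mul_eq_zero,
    pow_eq_zero_iff two_ne_zero, norm_eq_zero]
  exact forall₂_congr fun j k => by rw [← mul_eq_zero]; exact or_iff_not_imp_left

theorem lagrange_identity (a c : ι → ℝ) (F : ι → E) :
    (∑ k, a k * c k ^ 2) * (∑ k, a k * ‖F k‖ ^ 2) - ‖∑ k, (a k * c k) • F k‖ ^ 2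
      = lagrangeDefect a c F / 2 := by
  have hexpand : ∀ j k, a j * a k * ‖c j • F k - c k • F j‖ ^ 2
      = a j * c j ^ 2 * (a k * ‖F k‖ ^ 2) + a k * c k ^ 2 * (a j * ‖F j‖ ^ 2)
        - 2 * (a j * c j * (a k * c k * inner ℝ (F j) (F k))) := fun j k => by
    rw [norm_sub_sq_real, norm_smul, norm_smul, real_inner_smul_left, real_inner_smul_right,
      real_inner_comm (F j)]
    simp only [mul_pow, Real.norm_eq_abs, sq_abs]
    ring
  have hcross : ‖∑ k, (a k * c k) • F k‖ ^ 2
      = ∑ j, a j * c j * ∑ k, a k * c k * inner ℝ (F j) (F k) := by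
    simp_rw [← real_inner_self_eq_norm_sq, sum_inner, inner_sum, real_inner_smul_left,
      real_inner_smul_right, ← mul_sum]
  simp_rw [lagrangeDefect, hexpand, sum_sub_distrib, sum_add_distrib, ← mul_sum, ← sum_mul]
  rw [hcross, ← mul_sum]
  ring

/-- The gradient of `√(∑ₖ aₖ fₖ²)` at a point where `fₖ = cₖ` and `∇fₖ = Fₖ`. -/
noncomputable def redistributedGradient (a c : ι → ℝ) (F : ι → E) : E :=
  (√(∑ k, a k * c k ^ 2))⁻¹ • ∑ k, (a k * c k) • F k

theorem norm_redistributedGradient_sq {a c : ι → ℝ} (F : ι → E) (hS : 0 < ∑ k, a k * c k ^ 2) :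
    ‖redistributedGradient a c F‖ ^ 2
      = ∑ k, a k * ‖F k‖ ^ 2 - lagrangeDefect a c F / (2 * ∑ k, a k * c k ^ 2) := by
  rw [redistributedGradient, norm_smul, mul_pow, norm_inv, Real.norm_eq_abs, inv_pow, sq_abs,
    Real.sq_sqrt hS.le, div_mul_eq_div_div, ← lagrange_identity]
  field_simp
  ring

theorem sum_norm_sq_sub_sum_norm_redistributedGradient_sq {a : κ → ι → ℝ} {c : ι → ℝ}
    (F : ι → E) (ha : ∀ k, ∑ ℓ, a ℓ k = 1) (hS : ∀ ℓ, 0 < ∑ k, a ℓ k * c k ^ 2) :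
    ∑ k, ‖F k‖ ^ 2 - ∑ ℓ, ‖redistributedGradient (a ℓ) c F‖ ^ 2
      = ∑ ℓ, lagrangeDefect (a ℓ) c F / (2 * ∑ k, a ℓ k * c k ^ 2) := by
  simp_rw [norm_redistributedGradient_sq F (hS _), sum_sub_distrib,
    sum_sum_mul_eq_sum_of_sum_eq_one ha]
  ring

variable {a : κ → ι → ℝ} {c : ι → ℝ}

theorem sum_norm_redistributedGradient_sq_le (F : ι → E) (ha₀ : ∀ ℓ k, 0 ≤ a ℓ k)
    (ha : ∀ k, ∑ ℓ, a ℓ k = 1) (hS : ∀ ℓ, 0 < ∑ k, a ℓ k * c k ^ 2) :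
    ∑ ℓ, ‖redistributedGradient (a ℓ) c F‖ ^ 2 ≤ ∑ k, ‖F k‖ ^ 2 := by
  have hdiff := sum_norm_sq_sub_sum_norm_redistributedGradient_sq F ha hS
  have : 0 ≤ ∑ ℓ, lagrangeDefect (a ℓ) c F / (2 * ∑ k, a ℓ k * c k ^ 2) :=
    sum_nonneg fun ℓ _ => div_nonneg (lagrangeDefect_nonneg (ha₀ ℓ) c F) (by linarith [hS ℓ])
  linarith

theorem sum_norm_redistributedGradient_sq_eq_iff (F : ι → E) (ha₀ : ∀ ℓ k, 0 ≤ a ℓ k)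
    (ha : ∀ k, ∑ ℓ, a ℓ k = 1) (hS : ∀ ℓ, 0 < ∑ k, a ℓ k * c k ^ 2) :
    ∑ ℓ, ‖redistributedGradient (a ℓ) c F‖ ^ 2 = ∑ k, ‖F k‖ ^ 2 ↔
      ∀ ℓ j k, a ℓ j * a ℓ k ≠ 0 → c j • F k - c k • F j = 0 := by
  rw [eq_comm, ← sub_eq_zero, sum_norm_sq_sub_sum_norm_redistributedGradient_sq F ha hS,
    sum_eq_zero_iff_of_nonneg fun ℓ _ =>
      div_nonneg (lagrangeDefect_nonneg (ha₀ ℓ) c F) (by linarith [hS ℓ])]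
  refine forall_congr' fun ℓ => ?_
  simp only [mem_univ, forall_const]
  rw [div_eq_zero_iff, or_iff_left (by linarith [hS ℓ]),
    lagrangeDefect_eq_zero_iff (ha₀ ℓ)]

end Redistribution

theorem HasGradientAt.sqrt_sum_mul_sq {ι E : Type*} [Fintype ι] [NormedAddCommGroup E]
    [InnerProductSpace ℝ E] [CompleteSpace E] {a : ι → ℝ} {f : ι → E → ℝ} {F : ι → E} {x : E}
    (hf : ∀ k, HasGradientAt (f k) (F k) x) (hS : 0 < ∑ k, a k * f k x ^ 2) :
    HasGradientAt (fun y => √(∑ k, a k * f k y ^ 2)) (redistributedGradient a (f · x) F) x := by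
  have hsum : HasFDerivAt (fun y => ∑ k, a k * f k y ^ 2)
      (∑ k, (a k * (2 * f k x)) • toDual ℝ E (F k)) x :=
    HasFDerivAt.fun_sum fun k _ => by
      simpa [smul_smul] using ((hf k).hasFDerivAt.pow 2).const_mul (a k)
  rw [hasGradientAt_iff_hasFDerivAt]
  refine (hsum.sqrt hS.ne').congr_fderiv ?_
  simp only [redistributedGradient, map_smul, map_sum, smul_sum, smul_smul]
  refine sum_congr rfl fun k _ => ?_
  congr 1
  field_simp

theorem mass_redistribution_kinetic_energy_general {d n m : ℕ}
    (U : Set (EuclideanSpace ℝ (Fin d)))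
    (f : Fin n → EuclideanSpace ℝ (Fin d) → ℝ)
    (a : Fin m → Fin n → ℝ)
    (ha0 : ∀ ℓ k, 0 ≤ a ℓ k)
    (hasum : ∀ k, ∑ ℓ, a ℓ k = 1)
    (g : Fin m → EuclideanSpace ℝ (Fin d) → ℝ)
    (hg : ∀ ℓ, g ℓ = fun y => Real.sqrt (∑ k, a ℓ k * (f k y) ^ 2)) :
    (∀ x ∈ U, ∑ ℓ, (g ℓ x) ^ 2 = ∑ k, (f k x) ^ 2) ∧
    (∀ x ∈ U, (∀ k, DifferentiableAt ℝ (f k) x) → (∀ ℓ, 0 < g ℓ x) →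
      (∀ ℓ, DifferentiableAt ℝ (g ℓ) x) ∧
      (∑ ℓ, ‖gradient (g ℓ) x‖ ^ 2 ≤ ∑ k, ‖gradient (f k) x‖ ^ 2) ∧
      (∑ ℓ, ‖gradient (g ℓ) x‖ ^ 2 = ∑ k, ‖gradient (f k) x‖ ^ 2 ↔
        ∀ j k, j ≠ k → (∃ ℓ, a ℓ j * a ℓ k ≠ 0) →
          f j x • gradient (f k) x - f k x • gradient (f j) x = 0)) := by
  have hg_sq : ∀ ℓ y, g ℓ y ^ 2 = ∑ k, a ℓ k * f k y ^ 2 := fun ℓ y => by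
    rw [hg ℓ]
    exact Real.sq_sqrt (sum_nonneg fun k _ => mul_nonneg (ha0 ℓ k) (sq_nonneg _))
  refine ⟨fun x _ => by simp_rw [hg_sq, sum_sum_mul_eq_sum_of_sum_eq_one hasum], ?_⟩
  intro x _ hf hg_pos
  have hS : ∀ ℓ, 0 < ∑ k, a ℓ k * f k x ^ 2 := fun ℓ => hg_sq ℓ x ▸ pow_pos (hg_pos ℓ) 2
  have hg_grad : ∀ ℓ, HasGradientAt (g ℓ)
      (redistributedGradient (a ℓ) (f · x) fun k => gradient (f k) x) x := fun ℓ =>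
    hg ℓ ▸ HasGradientAt.sqrt_sum_mul_sq (fun k => (hf k).hasGradientAt) (hS ℓ)
  simp_rw [(hg_grad _).gradient]
  refine ⟨fun ℓ => (hg_grad ℓ).differentiableAt,
    sum_norm_redistributedGradient_sq_le _ ha0 hasum hS, ?_⟩
  rw [sum_norm_redistributedGradient_sq_eq_iff _ ha0 hasum hS]
  constructor
  · rintro h j k - ⟨ℓ, hℓ⟩
    exact h ℓ j k hℓ
  · intro h ℓ j k hℓ
    rcases eq_or_ne j k with rfl | hjk
    · exact sub_self _
    · exact h j k hjk ⟨ℓ, hℓ⟩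

/-- Mass redistribution reduces the kinetic energy density.
Given nonnegative `f₁, …, fₙ` on an open `U ⊆ ℝ^d`, nonnegative constants `a_{ℓk}` with
`Σ_ℓ a_{ℓk} = 1` for each `k`, and `g_ℓ = (Σ_k a_{ℓk} fₖ²)^{1/2}`, we have
(1) `Σ_ℓ g_ℓ² = Σ_k fₖ²` on `U`; and
(2) if each `fₖ` is differentiable at `x ∈ U` and `g_ℓ(x) > 0` for every `ℓ`, then each `g_ℓ`
is differentiable at `x` and `Σ_ℓ ‖∇g_ℓ(x)‖² ≤ Σ_k ‖∇fₖ(x)‖²`, with equality iff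
`fⱼ(x)∇fₖ(x) − fₖ(x)∇fⱼ(x) = 0` for every `j ≠ k` with `a_{ℓj}a_{ℓk} ≠ 0` for some `ℓ`. -/
theorem mass_redistribution_kinetic_energy {d n m : ℕ} (hn : 1 ≤ n) (hm : 1 ≤ m)
    (U : Set (EuclideanSpace ℝ (Fin d))) (hU : IsOpen U)
    (f : Fin n → EuclideanSpace ℝ (Fin d) → ℝ)
    (hf0 : ∀ k, ∀ x ∈ U, 0 ≤ f k x)
    (a : Fin m → Fin n → ℝ)
    (ha0 : ∀ ℓ k, 0 ≤ a ℓ k)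
    (hasum : ∀ k, ∑ ℓ, a ℓ k = 1)
    (g : Fin m → EuclideanSpace ℝ (Fin d) → ℝ)
    (hg : ∀ ℓ, g ℓ = fun y => Real.sqrt (∑ k, a ℓ k * (f k y) ^ 2)) :
    (∀ x ∈ U, ∑ ℓ, (g ℓ x) ^ 2 = ∑ k, (f k x) ^ 2) ∧
    (∀ x ∈ U, (∀ k, DifferentiableAt ℝ (f k) x) → (∀ ℓ, 0 < g ℓ x) →
      (∀ ℓ, DifferentiableAt ℝ (g ℓ) x) ∧
      (∑ ℓ, ‖gradient (g ℓ) x‖ ^ 2 ≤ ∑ k, ‖gradient (f k) x‖ ^ 2) ∧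
      (∑ ℓ, ‖gradient (g ℓ) x‖ ^ 2 = ∑ k, ‖gradient (f k) x‖ ^ 2 ↔
        ∀ j k, j ≠ k → (∃ ℓ, a ℓ j * a ℓ k ≠ 0) →
          f j x • gradient (f k) x - f k x • gradient (f j) x = 0)) :=
  mass_redistribution_kinetic_energy_general U f a ha0 hasum g hg
end

section
/- Let N > 0 and M ∈ ℝ with |M| < N, and set m = M/N. Let Γ = {γ = (γ₁, γ₀, γ₋₁) ∈ ℝ³ : γ_j ≥ 0 for each j, γ₁² + γ₀² + γ₋₁² = 1, γ₁² − γ₋₁² = m}, and define P(γ) = 2γ₀²(γ₁ + γ₋₁)² + m². Then the maximum of P over Γ equals 1, and it is attained exactly at the single point γ* = (γ₁*, γ₀*, γ₋₁*) given by γ₁* = (1 + m)/2, γ₀* = √((1 − m²)/2), γ₋₁* = (1 − m)/2; i.e., P(γ*) = 1 and P(γ) < 1 for every γ ∈ Γ with γ ≠ γ*. -/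
/-! On the unit sphere, with `s = γ₁ + γ₋₁` and `γ₁² − γ₋₁² = (γ₁ − γ₋₁) s`, the function
`P` collapses to `s²(2 − s²) = 1 − (s² − 1)²`. Hence `P ≤ 1` with equality iff `s = 1`; then
`γ₁ − γ₋₁ = m`, which fixes `γ₁` and `γ₋₁`, and the sphere constraint then fixes `γ₀ ≥ 0`. -/

lemma spinExchange_eq_one_sub_sq {a b c : ℝ} (hsphere : a ^ 2 + b ^ 2 + c ^ 2 = 1) :
    2 * b ^ 2 * (a + c) ^ 2 + (a ^ 2 - c ^ 2) ^ 2 = 1 - ((a + c) ^ 2 - 1) ^ 2 := by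
  linear_combination 2 * (a + c) ^ 2 * hsphere

lemma spinExchange_lt_one {a b c : ℝ} (ha : 0 ≤ a) (hc : 0 ≤ c)
    (hsphere : a ^ 2 + b ^ 2 + c ^ 2 = 1) (hs : a + c ≠ 1) :
    2 * b ^ 2 * (a + c) ^ 2 + (a ^ 2 - c ^ 2) ^ 2 < 1 := by
  have hs2 : (a + c) ^ 2 - 1 ≠ 0 := by
    intro h
    have : (a + c - 1) * (a + c + 1) = 0 := by linear_combination h
    rcases mul_eq_zero.mp this with h' | h'
    · exact hs (by linarith)
    · linarith
  rw [spinExchange_eq_one_sub_sq hsphere]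
  linarith [sq_pos_of_ne_zero hs2]

lemma eq_optimalTriple_of_add_eq_one {a b c m : ℝ} (hb : 0 ≤ b)
    (hsphere : a ^ 2 + b ^ 2 + c ^ 2 = 1) (hdiff : a ^ 2 - c ^ 2 = m) (hs : a + c = 1) :
    a = (1 + m) / 2 ∧ b = √((1 - m ^ 2) / 2) ∧ c = (1 - m) / 2 := by
  have hsub : a - c = m := by linear_combination hdiff - (a - c) * hs
  have ha : a = (1 + m) / 2 := by linarith
  have hc : c = (1 - m) / 2 := by linarith
  refine ⟨ha, ?_, hc⟩
  rw [← Real.sqrt_sq hb]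
  congr 1
  subst ha hc
  linarith

/-- Let `N > 0`, `|M| < N`, `m = M/N`. Over the constraint set
`Γ = {γ ≥ 0 : γ₁² + γ₀² + γ₋₁² = 1, γ₁² − γ₋₁² = m}`, the function
`P(γ) = 2γ₀²(γ₁ + γ₋₁)² + m²` has maximum value `1`, attained exactly at
`γ* = ((1+m)/2, √((1−m²)/2), (1−m)/2)`. -/
theorem max_of_P_over_Gamma (N M : ℝ) (hN : 0 < N) (hM : |M| < N) :
    -- γ* belongs to Γ:
    (0 ≤ (1 + M / N) / 2 ∧ 0 ≤ Real.sqrt ((1 - M ^ 2 / N ^ 2) / 2) ∧ 0 ≤ (1 - M / N) / 2 ∧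
      ((1 + M / N) / 2) ^ 2 + (Real.sqrt ((1 - M ^ 2 / N ^ 2) / 2)) ^ 2
        + ((1 - M / N) / 2) ^ 2 = 1 ∧
      ((1 + M / N) / 2) ^ 2 - ((1 - M / N) / 2) ^ 2 = M / N) ∧
    -- P(γ*) = 1:
    2 * (Real.sqrt ((1 - M ^ 2 / N ^ 2) / 2)) ^ 2
        * ((1 + M / N) / 2 + (1 - M / N) / 2) ^ 2 + (M / N) ^ 2 = 1 ∧
    -- P(γ) < 1 for every γ ∈ Γ with γ ≠ γ*:
    ∀ γ₁ γ₀ γₘ : ℝ, 0 ≤ γ₁ → 0 ≤ γ₀ → 0 ≤ γₘ →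
      γ₁ ^ 2 + γ₀ ^ 2 + γₘ ^ 2 = 1 → γ₁ ^ 2 - γₘ ^ 2 = M / N →
      (γ₁, γ₀, γₘ) ≠ ((1 + M / N) / 2, Real.sqrt ((1 - M ^ 2 / N ^ 2) / 2), (1 - M / N) / 2) →
      2 * γ₀ ^ 2 * (γ₁ + γₘ) ^ 2 + (M / N) ^ 2 < 1 := by
  rw [← div_pow]
  set m := M / N
  have hm : |m| < 1 := by rwa [abs_div, abs_of_pos hN, div_lt_one hN]
  obtain ⟨hm₁, hm₂⟩ := abs_lt.mp hm
  have hsqrt : √((1 - m ^ 2) / 2) ^ 2 = (1 - m ^ 2) / 2 := Real.sq_sqrt (by nlinarith)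
  refine ⟨⟨by linarith, Real.sqrt_nonneg _, by linarith, by rw [hsqrt]; ring, by ring⟩,
    by rw [hsqrt]; ring, ?_⟩
  intro γ₁ γ₀ γₘ h₁ h₀ hₘ hsphere hdiff hne
  rw [← hdiff]
  refine spinExchange_lt_one h₁ hₘ hsphere fun hs => hne ?_
  obtain ⟨e₁, e₀, eₘ⟩ := eq_optimalTriple_of_add_eq_one h₀ hsphere hdiff hs
  rw [e₁, e₀, eₘ]
end

section
/- Let c_s ≤ 0, let U ⊆ ℝ^d be open, let u₁, u₀, u₋₁ : U → ℝ be nonnegative functions differentiable at a point x ∈ U, and let |u| = (u₁² + u₀² + u₋₁²)^{1/2}. If |u|(x) > 0 then |u| is differentiable at x and ( Σ_j ‖∇u_j(x)‖² + c_s(2u₀(x)²(u₁(x) + u₋₁(x))² + (u₁(x)² − u₋₁(x)²)²) ) − ( ‖∇|u|(x)‖² + c_s|u(x)|⁴ ) = ( Σ_j ‖∇u_j(x)‖² − ‖∇|u|(x)‖² ) − c_s (u₀(x)² − 2u₁(x)u₋₁(x))² ≥ 0; in particular the single-mode energy density ‖∇|u|(x)‖² + c_s|u(x)|⁴ is no larger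 than the energy density Σ_j ‖∇u_j(x)‖² + c_s(2u₀²(u₁ + u₋₁)² + (u₁² − u₋₁²)²) evaluated at x. -/
/-!
By the chain rule `∇|u| = |u|⁻¹ ∑ⱼ uⱼ ∇uⱼ`, so Cauchy–Schwarz gives `‖∇|u|‖² ≤ ∑ⱼ ‖∇uⱼ‖²`.
The interaction terms differ by the identity
`|u|⁴ - 2u₀²(u₁ + u₋₁)² - (u₁² - u₋₁²)² = (u₀² - 2u₁u₋₁)²`, which enters with the
nonnegative coefficient `-c_s`.
-/

open Finset

theorem norm_sum_smul_sq_le {ι E : Type*} [SeminormedAddCommGroup E] [NormedSpace ℝ E]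
    (s : Finset ι) (a : ι → ℝ) (g : ι → E) :
    ‖∑ i ∈ s, a i • g i‖ ^ 2 ≤ (∑ i ∈ s, a i ^ 2) * ∑ i ∈ s, ‖g i‖ ^ 2 :=
  calc ‖∑ i ∈ s, a i • g i‖ ^ 2 ≤ (∑ i ∈ s, |a i| * ‖g i‖) ^ 2 := by
        gcongr
        exact (norm_sum_le _ _).trans_eq (by simp only [norm_smul, Real.norm_eq_abs])
    _ ≤ (∑ i ∈ s, |a i| ^ 2) * ∑ i ∈ s, ‖g i‖ ^ 2 := sum_mul_sq_le_sq_mul_sq _ _ _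
    _ = (∑ i ∈ s, a i ^ 2) * ∑ i ∈ s, ‖g i‖ ^ 2 := by simp only [sq_abs]

section SqrtSumSq

variable {E ι : Type*} [NormedAddCommGroup E] [InnerProductSpace ℝ E] [CompleteSpace E]
  [Fintype ι] {u : ι → E → ℝ} {x : E}

theorem HasGradientAt.sqrt_sum_sq_s4 {g : ι → E} (hu : ∀ i, HasGradientAt (u i) (g i) x)
    (hx : ∑ i, u i x ^ 2 ≠ 0) :
    HasGradientAt (fun y ↦ √(∑ i, u i y ^ 2)) ((√(∑ i, u i x ^ 2))⁻¹ • ∑ i, u i x • g i) x := by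
  rw [hasGradientAt_iff_hasFDerivAt]
  refine ((HasFDerivAt.fun_sum fun i _ ↦
    (hasGradientAt_iff_hasFDerivAt.1 (hu i)).pow 2).sqrt hx).congr_fderiv ?_
  simp only [map_smul, map_sum, smul_sum, smul_smul]
  congr! 2 with i
  norm_num
  field_simp

theorem norm_sq_gradient_sqrt_sum_sq_le (hu : ∀ i, DifferentiableAt ℝ (u i) x)
    (hx : ∑ i, u i x ^ 2 ≠ 0) :
    ‖gradient (fun y ↦ √(∑ i, u i y ^ 2)) x‖ ^ 2 ≤ ∑ i, ‖gradient (u i) x‖ ^ 2 := by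
  have hS : 0 < ∑ i, u i x ^ 2 := lt_of_le_of_ne (by positivity) hx.symm
  rw [(HasGradientAt.sqrt_sum_sq_s4 (fun i ↦ (hu i).hasGradientAt) hx).gradient, norm_smul,
    mul_pow, norm_inv, Real.norm_eq_abs, inv_pow, sq_abs, Real.sq_sqrt hS.le]
  calc (∑ i, u i x ^ 2)⁻¹ * ‖∑ i, u i x • gradient (u i) x‖ ^ 2
      ≤ (∑ i, u i x ^ 2)⁻¹ * ((∑ i, u i x ^ 2) * ∑ i, ‖gradient (u i) x‖ ^ 2) := by
        gcongr
        exact norm_sum_smul_sq_le _ _ _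
    _ = ∑ i, ‖gradient (u i) x‖ ^ 2 := inv_mul_cancel_left₀ hx _

end SqrtSumSq

theorem ferro_pointwise_energy_comparison_general {d : ℕ} (cs : ℝ) (hcs : cs ≤ 0)
    (u1 u0 um1 : EuclideanSpace ℝ (Fin d) → ℝ)
    (x : EuclideanSpace ℝ (Fin d))
    (hd1 : DifferentiableAt ℝ u1 x) (hd0 : DifferentiableAt ℝ u0 x)
    (hdm1 : DifferentiableAt ℝ um1 x)
    (n : EuclideanSpace ℝ (Fin d) → ℝ)
    (hn : n = fun y => Real.sqrt ((u1 y) ^ 2 + (u0 y) ^ 2 + (um1 y) ^ 2))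
    (hnx : 0 < n x) :
    DifferentiableAt ℝ n x ∧
    (‖gradient u1 x‖ ^ 2 + ‖gradient u0 x‖ ^ 2 + ‖gradient um1 x‖ ^ 2
        + cs * (2 * (u0 x) ^ 2 * (u1 x + um1 x) ^ 2 + ((u1 x) ^ 2 - (um1 x) ^ 2) ^ 2))
      - (‖gradient n x‖ ^ 2 + cs * ((u1 x) ^ 2 + (u0 x) ^ 2 + (um1 x) ^ 2) ^ 2)
      = (‖gradient u1 x‖ ^ 2 + ‖gradient u0 x‖ ^ 2 + ‖gradient um1 x‖ ^ 2
          - ‖gradient n x‖ ^ 2)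
        - cs * ((u0 x) ^ 2 - 2 * u1 x * um1 x) ^ 2 ∧
    0 ≤ (‖gradient u1 x‖ ^ 2 + ‖gradient u0 x‖ ^ 2 + ‖gradient um1 x‖ ^ 2
          - ‖gradient n x‖ ^ 2)
        - cs * ((u0 x) ^ 2 - 2 * u1 x * um1 x) ^ 2 ∧
    ‖gradient n x‖ ^ 2 + cs * ((u1 x) ^ 2 + (u0 x) ^ 2 + (um1 x) ^ 2) ^ 2
      ≤ ‖gradient u1 x‖ ^ 2 + ‖gradient u0 x‖ ^ 2 + ‖gradient um1 x‖ ^ 2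
        + cs * (2 * (u0 x) ^ 2 * (u1 x + um1 x) ^ 2 + ((u1 x) ^ 2 - (um1 x) ^ 2) ^ 2) := by
  set u : Fin 3 → EuclideanSpace ℝ (Fin d) → ℝ := ![u1, u0, um1]
  have hn_sum : n = fun y ↦ √(∑ i, u i y ^ 2) := by simp [hn, u, Fin.sum_univ_three]
  have hu : ∀ i, DifferentiableAt ℝ (u i) x := by simp [u, Fin.forall_fin_succ, *]
  have hx : ∑ i, u i x ^ 2 ≠ 0 := by
    rw [hn_sum] at hnx
    exact (Real.sqrt_pos.1 hnx).ne'
  have hgrad :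
      ‖gradient n x‖ ^ 2 ≤ ‖gradient u1 x‖ ^ 2 + ‖gradient u0 x‖ ^ 2 + ‖gradient um1 x‖ ^ 2 := by
    simpa [hn_sum, u, Fin.sum_univ_three] using norm_sq_gradient_sqrt_sum_sq_le hu hx
  have hsinglet : 0 ≤ -cs * (u0 x ^ 2 - 2 * u1 x * um1 x) ^ 2 := by
    have := neg_nonneg.2 hcs
    positivity
  refine ⟨?_, by ring, by linear_combination hgrad + hsinglet,
    by linear_combination hgrad + hsinglet⟩
  rw [hn_sum]
  exact (HasGradientAt.sqrt_sum_sq_s4 (fun i ↦ (hu i).hasGradientAt) hx).differentiableAt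

/-- Pointwise energy comparison for ferromagnetic spin-1 condensates (`c_s ≤ 0`).
For nonnegative `u₁, u₀, u₋₁` differentiable at `x ∈ U` with `|u|(x) > 0`,
`|u| = (u₁² + u₀² + u₋₁²)^{1/2}` is differentiable at `x` and
`(Σ‖∇uⱼ‖² + c_s(2u₀²(u₁+u₋₁)² + (u₁²−u₋₁²)²)) − (‖∇|u|‖² + c_s|u|⁴)
 = (Σ‖∇uⱼ‖² − ‖∇|u|‖²) − c_s(u₀² − 2u₁u₋₁)² ≥ 0`. -/
theorem ferro_pointwise_energy_comparison {d : ℕ} (cs : ℝ) (hcs : cs ≤ 0)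
    (U : Set (EuclideanSpace ℝ (Fin d))) (hU : IsOpen U)
    (u1 u0 um1 : EuclideanSpace ℝ (Fin d) → ℝ)
    (h1 : ∀ y ∈ U, 0 ≤ u1 y) (h0 : ∀ y ∈ U, 0 ≤ u0 y) (hm1 : ∀ y ∈ U, 0 ≤ um1 y)
    (x : EuclideanSpace ℝ (Fin d)) (hx : x ∈ U)
    (hd1 : DifferentiableAt ℝ u1 x) (hd0 : DifferentiableAt ℝ u0 x)
    (hdm1 : DifferentiableAt ℝ um1 x)
    (n : EuclideanSpace ℝ (Fin d) → ℝ)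
    (hn : n = fun y => Real.sqrt ((u1 y) ^ 2 + (u0 y) ^ 2 + (um1 y) ^ 2))
    (hnx : 0 < n x) :
    DifferentiableAt ℝ n x ∧
    (‖gradient u1 x‖ ^ 2 + ‖gradient u0 x‖ ^ 2 + ‖gradient um1 x‖ ^ 2
        + cs * (2 * (u0 x) ^ 2 * (u1 x + um1 x) ^ 2 + ((u1 x) ^ 2 - (um1 x) ^ 2) ^ 2))
      - (‖gradient n x‖ ^ 2 + cs * ((u1 x) ^ 2 + (u0 x) ^ 2 + (um1 x) ^ 2) ^ 2)
      = (‖gradient u1 x‖ ^ 2 + ‖gradient u0 x‖ ^ 2 + ‖gradient um1 x‖ ^ 2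
          - ‖gradient n x‖ ^ 2)
        - cs * ((u0 x) ^ 2 - 2 * u1 x * um1 x) ^ 2 ∧
    0 ≤ (‖gradient u1 x‖ ^ 2 + ‖gradient u0 x‖ ^ 2 + ‖gradient um1 x‖ ^ 2
          - ‖gradient n x‖ ^ 2)
        - cs * ((u0 x) ^ 2 - 2 * u1 x * um1 x) ^ 2 ∧
    ‖gradient n x‖ ^ 2 + cs * ((u1 x) ^ 2 + (u0 x) ^ 2 + (um1 x) ^ 2) ^ 2
      ≤ ‖gradient u1 x‖ ^ 2 + ‖gradient u0 x‖ ^ 2 + ‖gradient um1 x‖ ^ 2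
        + cs * (2 * (u0 x) ^ 2 * (u1 x + um1 x) ^ 2 + ((u1 x) ^ 2 - (um1 x) ^ 2) ^ 2) :=
  ferro_pointwise_energy_comparison_general cs hcs u1 u0 um1 x hd1 hd0 hdm1 n hn hnx
end

section
/- Let c_s ≥ 0, let U ⊆ ℝ^d be open, and let u₁, u₀, u₋₁ : U → ℝ be nonnegative functions differentiable at a point x ∈ U. Define ũ₁ = (u₁² + u₀²/2)^{1/2} and ũ₋₁ = (u₋₁² + u₀²/2)^{1/2}. Then ũ₁² + ũ₋₁² = u₁² + u₀² + u₋₁² and ũ₁² − ũ₋₁² = u₁² − u₋₁² on U; and if ũ₁(x) > 0 and ũ₋₁(x) > 0, then ũ₁ and ũ₋₁ are differentiable at x and ( Σ_j ‖∇u_j(x)‖² + c_s(2u₀(x)²(u₁(x) − u₋₁(x))² + (u₁(x)² − u₋₁(x)²)²) ) − ( ‖∇ũ₁(x)‖² + ‖∇ũ₋₁(x)‖² + c_s(ũ₁(x)² − ũ₋₁(x)²)² ) = ( Σ_j ‖∇u_j(x)‖² − ‖∇ũ₁(x)‖² − ‖∇ũ₋₁(x)‖² ) + 2c_s u₀(x)²(u₁(x)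 − u₋₁(x))² ≥ 0. -/
/-!
At any point where `q = f² + c g²` does not vanish, `√q` is differentiable with derivative
`(f Df + c g Dg) / √q`, and the weighted Cauchy–Schwarz inequality
`‖f A + c g B‖² ≤ (f² + c g²)(‖A‖² + c‖B‖²)` bounds its square by `‖Df‖² + c‖Dg‖²`.
With `c = 1/2` this gives `‖∇ũ₁‖² ≤ ‖∇u₁‖² + ‖∇u₀‖²/2` and `‖∇ũ₋₁‖² ≤ ‖∇u₋₁‖² + ‖∇u₀‖²/2`,
whose sum is the kinetic part of the inequality; the interaction part only drops the
nonnegative term `2 c_s u₀² (u₁ − u₋₁)²`, since `ũ₁² − ũ₋₁² = u₁² − u₋₁²`.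
-/

open InnerProductSpace

lemma norm_gradient_eq_norm_fderiv {F : Type*} [NormedAddCommGroup F] [InnerProductSpace ℝ F]
    [CompleteSpace F] (f : F → ℝ) (x : F) : ‖gradient f x‖ = ‖fderiv ℝ f x‖ := by
  rw [← toDual_gradient, LinearIsometryEquiv.norm_map]

lemma sq_norm_smul_add_mul_smul_le {E : Type*} [SeminormedAddCommGroup E] [NormedSpace ℝ E]
    {c : ℝ} (hc : 0 ≤ c) (a b : ℝ) (A B : E) :
    ‖a • A + (c * b) • B‖ ^ 2 ≤ (a ^ 2 + c * b ^ 2) * (‖A‖ ^ 2 + c * ‖B‖ ^ 2) := by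
  have htri : ‖a • A + (c * b) • B‖ ≤ |a| * ‖A‖ + c * (|b| * ‖B‖) := by
    refine (norm_add_le _ _).trans_eq ?_
    rw [norm_smul, norm_smul, Real.norm_eq_abs, Real.norm_eq_abs, abs_mul, abs_of_nonneg hc,
      mul_assoc]
  calc ‖a • A + (c * b) • B‖ ^ 2 ≤ (|a| * ‖A‖ + c * (|b| * ‖B‖)) ^ 2 := by gcongr
    _ = (a ^ 2 + c * b ^ 2) * (‖A‖ ^ 2 + c * ‖B‖ ^ 2) - c * (|a| * ‖B‖ - |b| * ‖A‖) ^ 2 := by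
      rw [← sq_abs a, ← sq_abs b]; ring
    _ ≤ (a ^ 2 + c * b ^ 2) * (‖A‖ ^ 2 + c * ‖B‖ ^ 2) := by
      have := mul_nonneg hc (sq_nonneg (|a| * ‖B‖ - |b| * ‖A‖)); linarith

section

variable {E : Type*} [NormedAddCommGroup E] [NormedSpace ℝ E] {f g : E → ℝ} {c : ℝ} {x : E}

lemma HasFDerivAt.sqrt_sq_add_mul_sq {f' g' : E →L[ℝ] ℝ} (hf : HasFDerivAt f f' x)
    (hg : HasFDerivAt g g' x) (hx : f x ^ 2 + c * g x ^ 2 ≠ 0) :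
    HasFDerivAt (fun y => √(f y ^ 2 + c * g y ^ 2))
      ((√(f x ^ 2 + c * g x ^ 2))⁻¹ • (f x • f' + (c * g x) • g')) x := by
  convert ((hf.pow 2).add ((hg.pow 2).const_mul c)).sqrt hx using 1
  simp only [Pi.add_apply]
  module

lemma sq_norm_fderiv_sqrt_sq_add_mul_sq_le (hc : 0 ≤ c) (hf : DifferentiableAt ℝ f x)
    (hg : DifferentiableAt ℝ g x) (hx : 0 < f x ^ 2 + c * g x ^ 2) :
    DifferentiableAt ℝ (fun y => √(f y ^ 2 + c * g y ^ 2)) x ∧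
      ‖fderiv ℝ (fun y => √(f y ^ 2 + c * g y ^ 2)) x‖ ^ 2
        ≤ ‖fderiv ℝ f x‖ ^ 2 + c * ‖fderiv ℝ g x‖ ^ 2 := by
  have hD := hf.hasFDerivAt.sqrt_sq_add_mul_sq hg.hasFDerivAt hx.ne'
  refine ⟨hD.differentiableAt, ?_⟩
  rw [hD.fderiv, norm_smul, mul_pow, norm_inv, Real.norm_eq_abs,
    abs_of_nonneg (Real.sqrt_nonneg _), inv_pow, Real.sq_sqrt hx.le, inv_mul_le_iff₀ hx]
  exact sq_norm_smul_add_mul_smul_le hc _ _ _ _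

end

theorem antiferro_pointwise_energy_comparison_general {d : ℕ} (cs : ℝ) (hcs : 0 ≤ cs)
    (U : Set (EuclideanSpace ℝ (Fin d)))
    (u1 u0 um1 : EuclideanSpace ℝ (Fin d) → ℝ)
    (x : EuclideanSpace ℝ (Fin d))
    (hd1 : DifferentiableAt ℝ u1 x) (hd0 : DifferentiableAt ℝ u0 x)
    (hdm1 : DifferentiableAt ℝ um1 x)
    (v1 vm1 : EuclideanSpace ℝ (Fin d) → ℝ)
    (hv1 : v1 = fun y => Real.sqrt ((u1 y) ^ 2 + (u0 y) ^ 2 / 2))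
    (hvm1 : vm1 = fun y => Real.sqrt ((um1 y) ^ 2 + (u0 y) ^ 2 / 2)) :
    (∀ y ∈ U, (v1 y) ^ 2 + (vm1 y) ^ 2 = (u1 y) ^ 2 + (u0 y) ^ 2 + (um1 y) ^ 2) ∧
    (∀ y ∈ U, (v1 y) ^ 2 - (vm1 y) ^ 2 = (u1 y) ^ 2 - (um1 y) ^ 2) ∧
    (0 < v1 x → 0 < vm1 x →
      DifferentiableAt ℝ v1 x ∧ DifferentiableAt ℝ vm1 x ∧
      (‖gradient u1 x‖ ^ 2 + ‖gradient u0 x‖ ^ 2 + ‖gradient um1 x‖ ^ 2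
          + cs * (2 * (u0 x) ^ 2 * (u1 x - um1 x) ^ 2 + ((u1 x) ^ 2 - (um1 x) ^ 2) ^ 2))
        - (‖gradient v1 x‖ ^ 2 + ‖gradient vm1 x‖ ^ 2
            + cs * ((v1 x) ^ 2 - (vm1 x) ^ 2) ^ 2)
        = (‖gradient u1 x‖ ^ 2 + ‖gradient u0 x‖ ^ 2 + ‖gradient um1 x‖ ^ 2
            - ‖gradient v1 x‖ ^ 2 - ‖gradient vm1 x‖ ^ 2)
          + 2 * cs * (u0 x) ^ 2 * (u1 x - um1 x) ^ 2 ∧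
      0 ≤ (‖gradient u1 x‖ ^ 2 + ‖gradient u0 x‖ ^ 2 + ‖gradient um1 x‖ ^ 2
            - ‖gradient v1 x‖ ^ 2 - ‖gradient vm1 x‖ ^ 2)
          + 2 * cs * (u0 x) ^ 2 * (u1 x - um1 x) ^ 2) := by
  have hv1' : v1 = fun y => √(u1 y ^ 2 + 2⁻¹ * u0 y ^ 2) := by
    simp only [hv1, div_eq_inv_mul]
  have hvm1' : vm1 = fun y => √(um1 y ^ 2 + 2⁻¹ * u0 y ^ 2) := by
    simp only [hvm1, div_eq_inv_mul]
  have sq1 (y) : v1 y ^ 2 = u1 y ^ 2 + u0 y ^ 2 / 2 := by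
    rw [hv1]; exact Real.sq_sqrt (by positivity)
  have sqm1 (y) : vm1 y ^ 2 = um1 y ^ 2 + u0 y ^ 2 / 2 := by
    rw [hvm1]; exact Real.sq_sqrt (by positivity)
  refine ⟨fun y _ => by rw [sq1, sqm1]; ring, fun y _ => by rw [sq1, sqm1]; ring, ?_⟩
  intro hv1x hvm1x
  rw [hv1', Real.sqrt_pos] at hv1x
  rw [hvm1', Real.sqrt_pos] at hvm1x
  obtain ⟨hdv1, hgrad1⟩ := sq_norm_fderiv_sqrt_sq_add_mul_sq_le (by norm_num) hd1 hd0 hv1x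
  obtain ⟨hdvm1, hgradm1⟩ := sq_norm_fderiv_sqrt_sq_add_mul_sq_le (by norm_num) hdm1 hd0 hvm1x
  rw [← hv1'] at hdv1 hgrad1
  rw [← hvm1'] at hdvm1 hgradm1
  refine ⟨hdv1, hdvm1, by rw [sq1, sqm1]; ring, ?_⟩
  simp only [norm_gradient_eq_norm_fderiv]
  have hdropped : 0 ≤ 2 * cs * u0 x ^ 2 * (u1 x - um1 x) ^ 2 := by positivity
  linarith

/-- Pointwise energy comparison for antiferromagnetic spin-1 condensates (`c_s ≥ 0`).
With `ũ₁ = (u₁² + u₀²/2)^{1/2}` and `ũ₋₁ = (u₋₁² + u₀²/2)^{1/2}` one has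
`ũ₁² + ũ₋₁² = u₁² + u₀² + u₋₁²` and `ũ₁² − ũ₋₁² = u₁² − u₋₁²` on `U`; and at any point `x`
of differentiability where `ũ₁(x), ũ₋₁(x) > 0`, the redistributed triple `(ũ₁, 0, ũ₋₁)`
has no larger energy density:
`(Σ‖∇uⱼ‖² + c_s(2u₀²(u₁−u₋₁)² + (u₁²−u₋₁²)²)) − (‖∇ũ₁‖² + ‖∇ũ₋₁‖² + c_s(ũ₁²−ũ₋₁²)²)
 = (Σ‖∇uⱼ‖² − ‖∇ũ₁‖² − ‖∇ũ₋₁‖²) + 2c_s u₀²(u₁−u₋₁)² ≥ 0`. -/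
theorem antiferro_pointwise_energy_comparison {d : ℕ} (cs : ℝ) (hcs : 0 ≤ cs)
    (U : Set (EuclideanSpace ℝ (Fin d))) (hU : IsOpen U)
    (u1 u0 um1 : EuclideanSpace ℝ (Fin d) → ℝ)
    (h1 : ∀ y ∈ U, 0 ≤ u1 y) (h0 : ∀ y ∈ U, 0 ≤ u0 y) (hm1 : ∀ y ∈ U, 0 ≤ um1 y)
    (x : EuclideanSpace ℝ (Fin d)) (hx : x ∈ U)
    (hd1 : DifferentiableAt ℝ u1 x) (hd0 : DifferentiableAt ℝ u0 x)
    (hdm1 : DifferentiableAt ℝ um1 x)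
    (v1 vm1 : EuclideanSpace ℝ (Fin d) → ℝ)
    (hv1 : v1 = fun y => Real.sqrt ((u1 y) ^ 2 + (u0 y) ^ 2 / 2))
    (hvm1 : vm1 = fun y => Real.sqrt ((um1 y) ^ 2 + (u0 y) ^ 2 / 2)) :
    (∀ y ∈ U, (v1 y) ^ 2 + (vm1 y) ^ 2 = (u1 y) ^ 2 + (u0 y) ^ 2 + (um1 y) ^ 2) ∧
    (∀ y ∈ U, (v1 y) ^ 2 - (vm1 y) ^ 2 = (u1 y) ^ 2 - (um1 y) ^ 2) ∧
    (0 < v1 x → 0 < vm1 x →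
      DifferentiableAt ℝ v1 x ∧ DifferentiableAt ℝ vm1 x ∧
      (‖gradient u1 x‖ ^ 2 + ‖gradient u0 x‖ ^ 2 + ‖gradient um1 x‖ ^ 2
          + cs * (2 * (u0 x) ^ 2 * (u1 x - um1 x) ^ 2 + ((u1 x) ^ 2 - (um1 x) ^ 2) ^ 2))
        - (‖gradient v1 x‖ ^ 2 + ‖gradient vm1 x‖ ^ 2
            + cs * ((v1 x) ^ 2 - (vm1 x) ^ 2) ^ 2)
        = (‖gradient u1 x‖ ^ 2 + ‖gradient u0 x‖ ^ 2 + ‖gradient um1 x‖ ^ 2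
            - ‖gradient v1 x‖ ^ 2 - ‖gradient vm1 x‖ ^ 2)
          + 2 * cs * (u0 x) ^ 2 * (u1 x - um1 x) ^ 2 ∧
      0 ≤ (‖gradient u1 x‖ ^ 2 + ‖gradient u0 x‖ ^ 2 + ‖gradient um1 x‖ ^ 2
            - ‖gradient v1 x‖ ^ 2 - ‖gradient vm1 x‖ ^ 2)
          + 2 * cs * (u0 x) ^ 2 * (u1 x - um1 x) ^ 2) :=
  antiferro_pointwise_energy_comparison_general cs hcs U u1 u0 um1 x hd1 hd0 hdm1 v1 vm1 hv1 hvm1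
end

section
/- (Strong positivity dichotomy for ground-state components.) Let u = (u₁, u₀, u₋₁) be a triple of nonnegative C² functions on D satisfying the Euler–Lagrange (Gross–Pitaevskii) system for some multipliers μ, λ ∈ ℝ. Then for each j ∈ {1, 0, −1}, either u_j ≡ 0 on D or u_j(x) > 0 for every x ∈ D. -/
noncomputable section

open MeasureTheory

/-- Euclidean space `ℝ^d`. -/
abbrev Euc (d : ℕ) := EuclideanSpace ℝ (Fin d)

/-- The Laplacian of `f : ℝ^d → ℝ`: the sum of the pure second derivatives along the
standard coordinate directions. -/
def lap {d : ℕ} (f : Euc d → ℝ) (x : Euc d) : ℝ :=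
  ∑ i : Fin d, fderiv ℝ (fun y => fderiv ℝ f y (EuclideanSpace.single i 1)) x
    (EuclideanSpace.single i 1)

/-- The sign convention in the spin-exchange term: `+` when `c_s < 0`, `−` when `c_s > 0`
(for `c_s = 0` the spin term vanishes, so the choice is immaterial). -/
def spinSign (cs : ℝ) : ℝ := if cs < 0 then 1 else -1

/-- Total density `|u|² = u₁² + u₀² + u₋₁²`. -/
def rho {d : ℕ} (u1 u0 um1 : Euc d → ℝ) (x : Euc d) : ℝ :=
  (u1 x) ^ 2 + (u0 x) ^ 2 + (um1 x) ^ 2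

/-- Spin-exchange energy density `2u₀²(u₁ ± u₋₁)² + (u₁² − u₋₁²)²`. -/
def spinDen {d : ℕ} (cs : ℝ) (u1 u0 um1 : Euc d → ℝ) (x : Euc d) : ℝ :=
  2 * (u0 x) ^ 2 * (u1 x + spinSign cs * um1 x) ^ 2 + ((u1 x) ^ 2 - (um1 x) ^ 2) ^ 2

/-- Energy density of a triple `(u₁, u₀, u₋₁)`. -/
def eDen {d : ℕ} (V : Euc d → ℝ) (cn cs : ℝ) (u1 u0 um1 : Euc d → ℝ) (x : Euc d) : ℝ :=
  ‖gradient u1 x‖ ^ 2 + ‖gradient u0 x‖ ^ 2 + ‖gradient um1 x‖ ^ 2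
    + V x * rho u1 u0 um1 x + cn * (rho u1 u0 um1 x) ^ 2 + cs * spinDen cs u1 u0 um1 x

/-- The energy functional `𝔼[u]`. -/
def Energy {d : ℕ} (D : Set (Euc d)) (V : Euc d → ℝ) (cn cs : ℝ)
    (u1 u0 um1 : Euc d → ℝ) : ℝ :=
  ∫ x in D, eDen V cn cs u1 u0 um1 x

/-- The admissible class `𝒜`: triples of nonnegative C¹ functions on `D`, every term of the
energy integrable on `D`, total mass `N` and total magnetization `M`. -/
def Admissible {d : ℕ} (D : Set (Euc d)) (V : Euc d → ℝ) (cn cs N M : ℝ)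
    (u1 u0 um1 : Euc d → ℝ) : Prop :=
  (∀ x ∈ D, 0 ≤ u1 x) ∧ (∀ x ∈ D, 0 ≤ u0 x) ∧ (∀ x ∈ D, 0 ≤ um1 x) ∧
  ContDiffOn ℝ 1 u1 D ∧ ContDiffOn ℝ 1 u0 D ∧ ContDiffOn ℝ 1 um1 D ∧
  IntegrableOn (fun x => ‖gradient u1 x‖ ^ 2) D ∧
  IntegrableOn (fun x => ‖gradient u0 x‖ ^ 2) D ∧
  IntegrableOn (fun x => ‖gradient um1 x‖ ^ 2) D ∧
  IntegrableOn (fun x => V x * rho u1 u0 um1 x) D ∧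
  IntegrableOn (fun x => (rho u1 u0 um1 x) ^ 2) D ∧
  IntegrableOn (fun x => spinDen cs u1 u0 um1 x) D ∧
  (∫ x in D, rho u1 u0 um1 x) = N ∧
  (∫ x in D, ((u1 x) ^ 2 - (um1 x) ^ 2)) = M

/-- A ground state: an admissible triple minimizing the energy over `𝒜`. -/
def IsGroundState {d : ℕ} (D : Set (Euc d)) (V : Euc d → ℝ) (cn cs N M : ℝ)
    (u1 u0 um1 : Euc d → ℝ) : Prop :=
  Admissible D V cn cs N M u1 u0 um1 ∧
  ∀ v1 v0 vm1 : Euc d → ℝ, Admissible D V cn cs N M v1 v0 vm1 →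
    Energy D V cn cs u1 u0 um1 ≤ Energy D V cn cs v1 v0 vm1

/-- The Euler–Lagrange (coupled Gross–Pitaevskii) system with multipliers `μ`, `λ`. -/
def ELSystem {d : ℕ} (D : Set (Euc d)) (V : Euc d → ℝ) (cn cs mu lam : ℝ)
    (u1 u0 um1 : Euc d → ℝ) : Prop :=
  ∀ x ∈ D,
    (mu + lam) * u1 x =
      -lap u1 x + V x * u1 x + 2 * cn * rho u1 u0 um1 x * u1 x
        + 2 * cs * ((u0 x) ^ 2 * (u1 x + spinSign cs * um1 x)
            + u1 x * ((u1 x) ^ 2 - (um1 x) ^ 2)) ∧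
    mu * u0 x =
      -lap u0 x + V x * u0 x + 2 * cn * rho u1 u0 um1 x * u0 x
        + 2 * cs * (u0 x * (u1 x + spinSign cs * um1 x) ^ 2) ∧
    (mu - lam) * um1 x =
      -lap um1 x + V x * um1 x + 2 * cn * rho u1 u0 um1 x * um1 x
        + 2 * cs * ((u0 x) ^ 2 * (um1 x + spinSign cs * u1 x)
            + um1 x * ((um1 x) ^ 2 - (u1 x) ^ 2))

/-!
Each component `u` satisfies a linear differential inequality `Δu ≤ c u` with `c` continuous:
the coupling terms `2 c_s (spinSign c_s) u₀² u_{∓1}` are nonpositive, since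
`c_s · spinSign c_s ≤ 0` and the components are nonnegative, so they can be dropped. For a
nonnegative solution of such an inequality the zero set is open: otherwise some ball inside
`{u > 0}` touches a zero `z` of `u` from inside, and Hopf's lemma (the weak minimum principle on an
annulus, compared with the barrier `exp (-α|x - p|²) - exp (-α r²)`) makes the inward normal
derivative of `u` at `z` positive, although `z` is an interior minimum of `u`. The set `{u > 0}` is
open as well, and connectedness of `D` gives the dichotomy.
-/

open Filter Topology Metric Set
open scoped RealInnerProductSpace

theorem IsLocalMin.deriv_deriv_nonneg {f : ℝ → ℝ} {a : ℝ} (h : IsLocalMin f a)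
    (hf : ContinuousAt f a) : 0 ≤ deriv (deriv f) a := by
  by_contra! hneg
  have hconst : f =ᶠ[𝓝 a] fun _ => f a :=
    (h.and (isLocalMax_of_deriv_deriv_neg hneg h.deriv_eq_zero hf)).mono
      fun x hx => le_antisymm hx.2 hx.1
  have : deriv (deriv f) a = 0 := by simp [hconst.deriv.deriv_eq]
  exact hneg.ne this

section LineRestriction

variable {E F : Type*} [NormedAddCommGroup E] [NormedSpace ℝ E]
  [NormedAddCommGroup F] [NormedSpace ℝ F]

theorem ContDiffAt.differentiableAt_fderiv_apply {f : E → F} {x : E} (hf : ContDiffAt ℝ 2 f x)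
    (v : E) : DifferentiableAt ℝ (fun y => fderiv ℝ f y v) x :=
  ((hf.fderiv_right (m := 1) le_rfl).differentiableAt one_ne_zero).clm_apply
    (differentiableAt_const v)

theorem deriv_deriv_comp_add_smul {f : E → F} {x : E} (hf : ContDiffAt ℝ 2 f x) (v : E) :
    deriv (deriv fun t : ℝ => f (x + t • v)) 0 = fderiv ℝ (fun y => fderiv ℝ f y v) x v := by
  have hline : ∀ t : ℝ, HasDerivAt (fun t : ℝ => x + t • v) v t := fun t => by
    simpa using ((hasDerivAt_id t).smul_const v).const_add x
  have hderiv : deriv (fun t : ℝ => f (x + t • v)) =ᶠ[𝓝 0] fun t => fderiv ℝ f (x + t • v) v := by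
    have hcont : Tendsto (fun t : ℝ => x + t • v) (𝓝 0) (𝓝 x) := by
      simpa using (hline 0).continuousAt.tendsto
    filter_upwards [hcont.eventually (hf.eventually (by simp))] with t ht
    exact ((ht.differentiableAt (by simp)).hasFDerivAt.comp_hasDerivAt t (hline t)).deriv
  rw [hderiv.deriv_eq]
  exact ((hf.differentiableAt_fderiv_apply v).hasFDerivAt.comp_hasDerivAt_of_eq (0 : ℝ)
    (hline 0) (by simp)).deriv

end LineRestriction

theorem annulus_boundary_subset_sphere_union {X : Type*} [PseudoMetricSpace X] {p : X}
    {r s : ℝ} :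
    (closedBall p r \ ball p s) \ (ball p r \ closedBall p s) ⊆ sphere p r ∪ sphere p s := by
  rintro y ⟨⟨hyr, hys⟩, hy⟩
  simp only [Set.mem_sdiff, mem_ball, mem_closedBall, not_and, not_le, not_lt] at hyr hys hy
  rcases hyr.lt_or_eq with hlt | heq
  · exact Or.inr (le_antisymm (hy hlt) hys)
  · exact Or.inl heq

theorem sub_mem_posTangentConeAt_annulus {E : Type*} [NormedAddCommGroup E] [NormedSpace ℝ E]
    {p z : E} {r : ℝ} (hr : 0 < r) (hz : z ∈ sphere p r) :
    p - z ∈ posTangentConeAt (closedBall p r \ ball p (r / 2)) z := by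
  refine mem_posTangentConeAt_of_frequently_mem (Eventually.frequently ?_)
  filter_upwards [Ioc_mem_nhdsGT (by norm_num : (0 : ℝ) < 1 / 2)] with t ht
  have hdist : dist (z + t • (p - z)) p = (1 - t) * r := by
    rw [dist_eq_norm, show z + t • (p - z) - p = (1 - t) • (z - p) by module, norm_smul,
      Real.norm_of_nonneg (by linarith [ht.2]), ← dist_eq_norm, mem_sphere.1 hz]
  constructor
  · rw [mem_closedBall, hdist]; nlinarith [ht.1]
  · rw [mem_ball, hdist]; nlinarith [ht.2]

section

variable {d : ℕ}

theorem lap_nonneg_of_isLocalMin {w : Euc d → ℝ} {x : Euc d} (hw : ContDiffAt ℝ 2 w x)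
    (hmin : IsLocalMin w x) : 0 ≤ lap w x :=
  Finset.sum_nonneg fun i _ => by
    rw [← deriv_deriv_comp_add_smul hw]
    have hline : ContinuousAt (fun t : ℝ => x + t • EuclideanSpace.single i (1 : ℝ)) 0 := by
      fun_prop
    refine IsLocalMin.deriv_deriv_nonneg ?_ (hw.continuousAt.comp_of_eq hline (by simp))
    exact IsLocalMin.comp_continuous (by simpa using hmin) hline

theorem lap_sub_mul {f g : Euc d → ℝ} {x : Euc d} (hf : ContDiffAt ℝ 2 f x)
    (hg : ContDiffAt ℝ 2 g x) (a : ℝ) :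
    lap (fun y => f y - a * g y) x = lap f x - a * lap g x := by
  have hfd : ∀ᶠ y in 𝓝 x,
      fderiv ℝ (fun y => f y - a * g y) y = fderiv ℝ f y - a • fderiv ℝ g y := by
    filter_upwards [hf.eventually (by simp), hg.eventually (by simp)] with y hfy hgy
    have hgy' := hgy.differentiableAt (by simp)
    rw [fderiv_fun_sub (hfy.differentiableAt (by simp)) (hgy'.const_mul a),
      fderiv_const_mul hgy']
  unfold lap
  rw [Finset.mul_sum, ← Finset.sum_sub_distrib]
  refine Finset.sum_congr rfl fun i _ => ?_
  set e : Euc d := EuclideanSpace.single i 1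
  have hfe : (fun y => fderiv ℝ (fun y => f y - a * g y) y e) =ᶠ[𝓝 x]
      fun y => fderiv ℝ f y e - a * fderiv ℝ g y e :=
    hfd.mono fun y hy => by simp [hy]
  rw [hfe.fderiv_eq, fderiv_fun_sub (hf.differentiableAt_fderiv_apply e)
      ((hg.differentiableAt_fderiv_apply e).const_mul a),
    fderiv_const_mul (hg.differentiableAt_fderiv_apply e)]
  simp

theorem lap_sub_const (f : Euc d → ℝ) (c : ℝ) : lap (fun y => f y - c) = lap f := by
  funext x
  simp only [lap, fderiv_sub_const]

section Gaussian

variable {E : Type*} [NormedAddCommGroup E]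

def gaussianAt (p : E) (α : ℝ) (y : E) : ℝ := Real.exp (-α * ‖y - p‖ ^ 2)

theorem gaussianAt_pos (p : E) (α : ℝ) (y : E) : 0 < gaussianAt p α y := Real.exp_pos _

theorem gaussianAt_of_mem_sphere {p y : E} {α s : ℝ} (hy : y ∈ sphere p s) :
    gaussianAt p α y = Real.exp (-α * s ^ 2) := by
  rw [mem_sphere, dist_eq_norm] at hy
  rw [gaussianAt, hy]

variable [InnerProductSpace ℝ E]

theorem contDiff_gaussianAt (p : E) (α : ℝ) {n : WithTop ℕ∞} :
    ContDiff ℝ n (gaussianAt p α) :=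
  (contDiff_const.mul ((contDiff_id.sub contDiff_const).norm_sq ℝ)).exp

theorem hasFDerivAt_gaussianAt (p : E) (α : ℝ) (y : E) :
    HasFDerivAt (gaussianAt p α) ((-2 * α * gaussianAt p α y) • innerSL ℝ (y - p)) y := by
  have := (((hasFDerivAt_id y).sub_const p).norm_sq.const_mul (-α)).exp
  refine this.congr_fderiv ?_
  ext v
  simp [gaussianAt]
  ring

theorem fderiv_gaussianAt_apply (p : E) (α : ℝ) (y v : E) :
    fderiv ℝ (gaussianAt p α) y v = -2 * α * ⟪y - p, v⟫ * gaussianAt p α y := by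
  rw [(hasFDerivAt_gaussianAt p α y).fderiv]
  simp [inner_sub_left]
  ring

theorem fderiv_fderiv_gaussianAt_apply (p : E) (α : ℝ) (y v : E) :
    fderiv ℝ (fun z => fderiv ℝ (gaussianAt p α) z v) y v
      = gaussianAt p α y * (4 * α ^ 2 * ⟪y - p, v⟫ ^ 2 - 2 * α * ‖v‖ ^ 2) := by
  simp only [fderiv_gaussianAt_apply]
  have hinner : HasFDerivAt (fun z => ⟪z - p, v⟫) (innerSL ℝ v) y :=
    ((innerSL ℝ v).hasFDerivAt.comp y ((hasFDerivAt_id y).sub_const p)).congr_of_eventuallyEq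
      (Eventually.of_forall fun z => real_inner_comm _ _)
  rw [((hinner.const_mul (-2 * α)).fun_mul (hasFDerivAt_gaussianAt p α y)).fderiv]
  simp [inner_sub_left]
  ring

end Gaussian

theorem lap_gaussianAt (p : Euc d) (α : ℝ) (y : Euc d) :
    lap (gaussianAt p α) y = gaussianAt p α y * (4 * α ^ 2 * ‖y - p‖ ^ 2 - 2 * α * d) := by
  simp only [lap, fderiv_fderiv_gaussianAt_apply, EuclideanSpace.inner_single_right]
  rw [← Finset.mul_sum, EuclideanSpace.real_norm_sq_eq]
  congr 1
  simp [Finset.sum_sub_distrib, Finset.mul_sum, mul_comm]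

theorem IsCompact.nonneg_of_lap_neg {K Ω : Set (Euc d)} {w : Euc d → ℝ} (hK : IsCompact K)
    (hΩ : IsOpen Ω) (hΩK : Ω ⊆ K) (hw : ContinuousOn w K) (hw2 : ∀ y ∈ Ω, ContDiffAt ℝ 2 w y)
    (hbdry : ∀ y ∈ K \ Ω, 0 ≤ w y) (hlap : ∀ y ∈ Ω, w y < 0 → lap w y < 0) :
    ∀ y ∈ K, 0 ≤ w y := by
  by_contra! ⟨x, hxK, hx⟩
  obtain ⟨y, hyK, hmin⟩ := hK.exists_isMinOn ⟨x, hxK⟩ hw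
  have hy : w y < 0 := (hmin hxK).trans_lt hx
  have hyΩ : y ∈ Ω := by_contra fun h => (hbdry y ⟨hyK, h⟩).not_gt hy
  exact (hlap y hyΩ hy).not_ge <| lap_nonneg_of_isLocalMin (hw2 y hyΩ)
    ((hmin.on_subset hΩK).isLocalMin (hΩ.mem_nhds hyΩ))

theorem lap_gaussianAt_ge {p y : Euc d} {r C α : ℝ} (hr : 0 < r) (hC : 0 ≤ C) (hα : 1 ≤ α)
    (hαr : 2 * d + C + 1 ≤ α * r ^ 2) (hy : r / 2 < ‖y - p‖) :
    (C + 1) * gaussianAt p α y ≤ lap (gaussianAt p α) y := by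
  rw [lap_gaussianAt, mul_comm]
  refine mul_le_mul_of_nonneg_left ?_ (gaussianAt_pos p α y).le
  have hr2 : r ^ 2 ≤ 4 * ‖y - p‖ ^ 2 := by nlinarith
  nlinarith [mul_le_mul_of_nonneg_left hαr (by linarith : (0 : ℝ) ≤ α),
    mul_le_mul_of_nonneg_left hr2 (by positivity : (0 : ℝ) ≤ α ^ 2)]

theorem lap_sub_mul_gaussianAt_neg {u : Euc d → ℝ} {p y : Euc d} {r C α ε e : ℝ}
    (hr : 0 < r) (hC : 0 ≤ C) (hα : 1 ≤ α) (hαr : 2 * d + C + 1 ≤ α * r ^ 2) (hε : 0 < ε)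
    (he : 0 ≤ e) (hy : r / 2 < ‖y - p‖) (hu2 : ContDiffAt ℝ 2 u y) (hlap : lap u y ≤ C * u y)
    (hneg : u y - ε * (gaussianAt p α y - e) < 0) :
    lap (fun x => u x - ε * (gaussianAt p α x - e)) y < 0 := by
  rw [lap_sub_mul hu2 ((contDiff_gaussianAt p α).contDiffAt.sub contDiffAt_const) ε,
    lap_sub_const]
  have hg := gaussianAt_pos p α y
  have hlapg := lap_gaussianAt_ge hr hC hα hαr hy
  have hCu : C * u y ≤ C * (ε * gaussianAt p α y) :=
    mul_le_mul_of_nonneg_left (by nlinarith) hC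
  nlinarith [mul_le_mul_of_nonneg_left hlapg hε.le]

theorem hopf_comparison {u : Euc d → ℝ} {p : Euc d} {r C α ε : ℝ} (hr : 0 < r) (hC : 0 ≤ C)
    (hα : 1 ≤ α) (hαr : 2 * d + C + 1 ≤ α * r ^ 2) (hε : 0 < ε)
    (hu : ContinuousOn u (closedBall p r)) (hu2 : ∀ x ∈ ball p r, ContDiffAt ℝ 2 u x)
    (hlap : ∀ x ∈ ball p r, lap u x ≤ C * u x) (houter : ∀ x ∈ sphere p r, 0 ≤ u x)
    (hinner : ∀ x ∈ sphere p (r / 2),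
      ε * (Real.exp (-α * (r / 2) ^ 2) - Real.exp (-α * r ^ 2)) ≤ u x) :
    ∀ x ∈ closedBall p r \ ball p (r / 2),
      ε * (gaussianAt p α x - Real.exp (-α * r ^ 2)) ≤ u x := by
  set e := Real.exp (-α * r ^ 2)
  refine fun x hx => sub_nonneg.1 <|
    ((isCompact_closedBall p r).diff isOpen_ball).nonneg_of_lap_neg
    (w := fun x => u x - ε * (gaussianAt p α x - e)) (isOpen_ball.sdiff isClosed_closedBall)
    (sdiff_subset_sdiff ball_subset_closedBall ball_subset_closedBall)
    ((hu.mono sdiff_subset).sub (continuous_const.mul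
      ((contDiff_gaussianAt p α (n := 0)).continuous.sub continuous_const)).continuousOn)
    (fun y hy => (hu2 y hy.1).sub (contDiffAt_const.mul
      ((contDiff_gaussianAt p α).contDiffAt.sub contDiffAt_const)))
    (fun y hy => ?_) (fun y hy hwy => ?_) x hx
  · rcases annulus_boundary_subset_sphere_union hy with hy | hy
    · rw [gaussianAt_of_mem_sphere hy, sub_self, mul_zero, sub_zero]
      exact houter y hy
    · rw [gaussianAt_of_mem_sphere hy, sub_nonneg]
      exact hinner y hy
  · have hy2 : r / 2 < ‖y - p‖ := by
      rw [← dist_eq_norm]; simpa using hy.2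
    exact lap_sub_mul_gaussianAt_neg hr hC hα hαr hε (Real.exp_pos _).le hy2 (hu2 y hy.1)
      (hlap y hy.1) hwy

theorem hopf_lemma {u : Euc d → ℝ} {p z : Euc d} {r C : ℝ} (hr : 0 < r) (hC : 0 ≤ C)
    (hu : ContinuousOn u (closedBall p r)) (hu2 : ∀ x ∈ ball p r, ContDiffAt ℝ 2 u x)
    (hpos : ∀ x ∈ ball p r, 0 < u x) (hnonneg : ∀ x ∈ sphere p r, 0 ≤ u x)
    (hlap : ∀ x ∈ ball p r, lap u x ≤ C * u x)
    (hz : z ∈ sphere p r) (huz : u z = 0) (hdiff : DifferentiableAt ℝ u z) :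
    0 < fderiv ℝ u z (p - z) := by
  have hsphere : sphere p (r / 2) ⊆ ball p r := fun x hx => by
    rw [mem_sphere] at hx; rw [mem_ball]; linarith
  obtain ⟨m, hm, hmu⟩ := (isCompact_sphere p (r / 2)).exists_forall_le'
    (hu.mono (hsphere.trans ball_subset_closedBall)) fun x hx => hpos x (hsphere hx)
  set α := max 1 ((2 * d + C + 1) / r ^ 2)
  have hαr : 2 * d + C + 1 ≤ α * r ^ 2 := (div_le_iff₀ (by positivity)).1 (le_max_right _ _)
  set e := Real.exp (-α * r ^ 2)
  have hgap : 0 < Real.exp (-α * (r / 2) ^ 2) - e := by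
    rw [sub_pos, Real.exp_lt_exp]; nlinarith
  set ε := m / (Real.exp (-α * (r / 2) ^ 2) - e)
  have hε : 0 < ε := div_pos hm hgap
  have hcomp := hopf_comparison hr hC (le_max_left _ _) hαr hε hu hu2 hlap hnonneg
    fun x hx => by rw [div_mul_cancel₀ _ hgap.ne']; exact hmu x hx
  set w : Euc d → ℝ := fun x => u x - ε * (gaussianAt p α x - e)
  have hmin : IsLocalMinOn w (closedBall p r \ ball p (r / 2)) z := by
    have hwz : w z = 0 := by
      simp only [w, huz, gaussianAt_of_mem_sphere hz, e, sub_self, mul_zero]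
    exact IsMinOn.localize fun x hx => hwz ▸ sub_nonneg.2 (hcomp x hx)
  have hw' : HasFDerivAt w (fderiv ℝ u z - ε • fderiv ℝ (gaussianAt p α) z) z :=
    hdiff.hasFDerivAt.sub ((((contDiff_gaussianAt p α (n := 1)).differentiable one_ne_zero
      z).hasFDerivAt.sub_const e).const_mul ε)
  have key := hmin.hasFDerivWithinAt_nonneg hw'.hasFDerivWithinAt
    (sub_mem_posTangentConeAt_annulus hr hz)
  have hinner : ⟪z - p, p - z⟫ = -r ^ 2 := by
    rw [← neg_sub z p, inner_neg_right, real_inner_self_eq_norm_sq, ← dist_eq_norm,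
      mem_sphere.1 hz]
  simp only [sub_apply, smul_apply, smul_eq_mul, fderiv_gaussianAt_apply, hinner] at key
  nlinarith [gaussianAt_pos p α z, mul_pos hε (gaussianAt_pos p α z)]

theorem exists_ball_touching_zero {X : Type*} [MetricSpace X] [ProperSpace X] {u : X → ℝ}
    {D : Set X} {z₀ : X} (hD : IsOpen D) (hu : ContinuousOn u D) (hz₀ : z₀ ∈ D)
    (huz₀ : u z₀ = 0) (hne : ∃ᶠ x in 𝓝 z₀, u x ≠ 0) :
    ∃ p r z, 0 < r ∧ closedBall p r ⊆ D ∧ (∀ x ∈ ball p r, u x ≠ 0) ∧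
      z ∈ sphere p r ∧ u z = 0 := by
  obtain ⟨R, hR, hRD⟩ := Metric.isOpen_iff.1 hD z₀ hz₀
  obtain ⟨p, hup, hp⟩ := (hne.and_eventually (ball_mem_nhds z₀ (by positivity : 0 < R / 4))).exists
  have hKD : closedBall z₀ (R / 2) ⊆ D := (closedBall_subset_ball (by linarith)).trans hRD
  set K := closedBall z₀ (R / 2) ∩ u ⁻¹' {0}
  have hK : IsClosed K :=
    (hu.mono hKD).preimage_isClosed_of_isClosed isClosed_closedBall isClosed_singleton
  have hz₀K : z₀ ∈ K := ⟨mem_closedBall_self (by positivity), huz₀⟩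
  obtain ⟨z, hzK, hzp⟩ := hK.exists_infDist_eq_dist ⟨z₀, hz₀K⟩ p
  set r := infDist p K
  have hrR : r < R / 4 := (infDist_le_dist_of_mem hz₀K).trans_lt (mem_ball.1 hp)
  have hsub : closedBall p r ⊆ closedBall z₀ (R / 2) := fun x hx => by
    rw [mem_closedBall] at hx ⊢
    linarith [dist_triangle x p z₀, mem_ball.1 hp]
  refine ⟨p, r, z, (hK.notMem_iff_infDist_pos ⟨z₀, hz₀K⟩).1 fun h => hup h.2,
    hsub.trans hKD, fun x hx hux => ?_, by rw [mem_sphere, dist_comm, ← hzp], hzK.2⟩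
  have hxK : x ∈ K := ⟨hsub (ball_subset_closedBall hx), hux⟩
  have := infDist_le_dist_of_mem (x := p) hxK
  rw [mem_ball, dist_comm] at hx
  linarith

theorem eventually_eq_zero_of_lap_le_mul {D : Set (Euc d)} {u c : Euc d → ℝ} {z₀ : Euc d}
    (hD : IsOpen D) (hu : ContDiffOn ℝ 2 u D) (hu0 : ∀ x ∈ D, 0 ≤ u x) (hc : ContinuousOn c D)
    (hlap : ∀ x ∈ D, lap u x ≤ c x * u x) (hz₀ : z₀ ∈ D) (huz₀ : u z₀ = 0) :
    ∀ᶠ x in 𝓝 z₀, u x = 0 := by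
  by_contra hne
  obtain ⟨p, r, z, hr, hpD, hpos, hz, huz⟩ :=
    exists_ball_touching_zero hD hu.continuousOn hz₀ huz₀ (not_eventually.1 hne)
  obtain ⟨C, hC⟩ := (isCompact_closedBall p r).exists_bound_of_continuousOn (hc.mono hpD)
  have hu2 : ∀ x ∈ D, ContDiffAt ℝ 2 u x := fun x hx => hu.contDiffAt (hD.mem_nhds hx)
  have hball : ball p r ⊆ D := ball_subset_closedBall.trans hpD
  have hzD : z ∈ D := hpD (sphere_subset_closedBall hz)
  have hlapC : ∀ x ∈ ball p r, lap u x ≤ C * u x := fun x hx =>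
    (hlap x (hball hx)).trans <| mul_le_mul_of_nonneg_right
      ((Real.le_norm_self _).trans (hC x (ball_subset_closedBall hx))) (hu0 x (hball hx))
  have hhopf := hopf_lemma hr ((norm_nonneg _).trans (hC p (mem_closedBall_self hr.le)))
    (hu.continuousOn.mono hpD) (fun x hx => hu2 x (hball hx))
    (fun x hx => (hu0 x (hball hx)).lt_of_ne' (hpos x hx))
    (fun x hx => hu0 x (hpD (sphere_subset_closedBall hx))) hlapC hz huz
    ((hu2 z hzD).differentiableAt (by simp))
  have hmin : IsLocalMin u z :=
    Filter.mem_of_superset (hD.mem_nhds hzD) fun x hx => huz ▸ hu0 x hx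
  simp [hmin.fderiv_eq_zero] at hhopf

theorem eq_zero_or_pos_of_lap_le_mul {D : Set (Euc d)} {u c : Euc d → ℝ} (hD : IsOpen D)
    (hDc : IsPreconnected D) (hu : ContDiffOn ℝ 2 u D) (hu0 : ∀ x ∈ D, 0 ≤ u x)
    (hc : ContinuousOn c D) (hlap : ∀ x ∈ D, lap u x ≤ c x * u x) :
    (∀ x ∈ D, u x = 0) ∨ (∀ x ∈ D, 0 < u x) := by
  have hdisj : Disjoint {x | ∀ᶠ y in 𝓝 x, u y = 0} (D ∩ u ⁻¹' Ioi 0) :=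
    Set.disjoint_left.2 fun x hx hx' => (hx'.2 : 0 < u x).ne' hx.self_of_nhds
  have hcover : D ⊆ {x | ∀ᶠ y in 𝓝 x, u y = 0} ∪ (D ∩ u ⁻¹' Ioi 0) := fun x hx =>
    (hu0 x hx).eq_or_lt.imp
      (fun h => eventually_eq_zero_of_lap_le_mul hD hu hu0 hc hlap hx h.symm) fun h => ⟨hx, h⟩
  exact (hDc.subset_or_subset isOpen_setOfPred_eventually_nhds
    (hu.continuousOn.isOpen_inter_preimage hD isOpen_Ioi) hdisj hcover).imp
    (fun h x hx => (h hx).self_of_nhds) fun h x hx => (h hx).2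

theorem mul_spinSign_nonpos (cs : ℝ) : cs * spinSign cs ≤ 0 := by
  unfold spinSign
  split_ifs with h <;> linarith

theorem continuousOn_rho {D : Set (Euc d)} {u1 u0 um1 : Euc d → ℝ} (h1 : ContinuousOn u1 D)
    (h0 : ContinuousOn u0 D) (hm1 : ContinuousOn um1 D) : ContinuousOn (rho u1 u0 um1) D := by
  unfold rho
  fun_prop

end

theorem ground_state_component_dichotomy_general {d : ℕ}
    (D : Set (Euc d)) (hDopen : IsOpen D) (hDconn : IsConnected D)
    (V : Euc d → ℝ) (hV : ContinuousOn V D)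
    (cn cs : ℝ)
    (u1 u0 um1 : Euc d → ℝ)
    (h1 : ∀ x ∈ D, 0 ≤ u1 x) (h0 : ∀ x ∈ D, 0 ≤ u0 x) (hm1 : ∀ x ∈ D, 0 ≤ um1 x)
    (hC1 : ContDiffOn ℝ 2 u1 D) (hC0 : ContDiffOn ℝ 2 u0 D) (hCm1 : ContDiffOn ℝ 2 um1 D)
    (mu lam : ℝ) (hEL : ELSystem D V cn cs mu lam u1 u0 um1) :
    ((∀ x ∈ D, u1 x = 0) ∨ (∀ x ∈ D, 0 < u1 x)) ∧
    ((∀ x ∈ D, u0 x = 0) ∨ (∀ x ∈ D, 0 < u0 x)) ∧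
    ((∀ x ∈ D, um1 x = 0) ∨ (∀ x ∈ D, 0 < um1 x)) := by
  have hu1 := hC1.continuousOn
  have hu0 := hC0.continuousOn
  have hum1 := hCm1.continuousOn
  have hρ := continuousOn_rho hu1 hu0 hum1
  have hs := mul_spinSign_nonpos cs
  refine ⟨eq_zero_or_pos_of_lap_le_mul hDopen hDconn.isPreconnected hC1 h1
      (c := fun x => V x - (mu + lam) + 2 * cn * rho u1 u0 um1 x
        + 2 * cs * (u0 x ^ 2 + (u1 x ^ 2 - um1 x ^ 2))) (by fun_prop) fun x hx => ?_,
    eq_zero_or_pos_of_lap_le_mul hDopen hDconn.isPreconnected hC0 h0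
      (c := fun x => V x - mu + 2 * cn * rho u1 u0 um1 x
        + 2 * cs * (u1 x + spinSign cs * um1 x) ^ 2) (by fun_prop) fun x hx => ?_,
    eq_zero_or_pos_of_lap_le_mul hDopen hDconn.isPreconnected hCm1 hm1
      (c := fun x => V x - (mu - lam) + 2 * cn * rho u1 u0 um1 x
        + 2 * cs * (u0 x ^ 2 + (um1 x ^ 2 - u1 x ^ 2))) (by fun_prop) fun x hx => ?_⟩
  · have hcoupling := mul_nonpos_of_nonpos_of_nonneg hs (mul_nonneg (sq_nonneg (u0 x)) (hm1 x hx))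
    linear_combination (hEL x hx).1 + 2 * hcoupling
  · linear_combination (hEL x hx).2.1
  · have hcoupling := mul_nonpos_of_nonpos_of_nonneg hs (mul_nonneg (sq_nonneg (u0 x)) (h1 x hx))
    linear_combination (hEL x hx).2.2 + 2 * hcoupling

/-- Strong positivity dichotomy: each component of a nonnegative C² solution of the
Euler–Lagrange (Gross–Pitaevskii) system on a nonempty open connected `D` is either
identically zero, or strictly positive everywhere on `D`. -/
theorem ground_state_component_dichotomy {d : ℕ} (hd : 1 ≤ d)
    (D : Set (Euc d)) (hDopen : IsOpen D) (hDne : D.Nonempty) (hDconn : IsConnected D)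
    (V : Euc d → ℝ) (hV : ContinuousOn V D)
    (cn cs N M : ℝ) (hN : 0 < N) (hM : |M| < N)
    (u1 u0 um1 : Euc d → ℝ)
    (h1 : ∀ x ∈ D, 0 ≤ u1 x) (h0 : ∀ x ∈ D, 0 ≤ u0 x) (hm1 : ∀ x ∈ D, 0 ≤ um1 x)
    (hC1 : ContDiffOn ℝ 2 u1 D) (hC0 : ContDiffOn ℝ 2 u0 D) (hCm1 : ContDiffOn ℝ 2 um1 D)
    (mu lam : ℝ) (hEL : ELSystem D V cn cs mu lam u1 u0 um1) :
    ((∀ x ∈ D, u1 x = 0) ∨ (∀ x ∈ D, 0 < u1 x)) ∧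
    ((∀ x ∈ D, u0 x = 0) ∨ (∀ x ∈ D, 0 < u0 x)) ∧
    ((∀ x ∈ D, um1 x = 0) ∨ (∀ x ∈ D, 0 < um1 x)) :=
  ground_state_component_dichotomy_general D hDopen hDconn V hV cn cs u1 u0 um1 h1 h0 hm1 hC1 hC0
    hCm1 mu lam hEL
end
end

section
/- Let Ψ = (ψ₁, ψ₀, ψ₋₁) be a triple of complex numbers written in polar form ψ_j = u_j e^{iθ_j} with u_j ≥ 0 and θ_j ∈ ℝ, and let S_x, S_y, S_z be the spin-1 Pauli matrices S_x = (1/√2)[[0,1,0],[1,0,1],[0,1,0]], S_y = (i/√2)[[0,−1,0],[1,0,−1],[0,1,0]], S_z = diag(1,0,−1). Then |Ψ*S_xΨ|² + |Ψ*S_yΨ|² + |Ψ*S_zΨ|² = 2u₀²( u₁² + u₋₁² + 2u₁u₋₁ cos(θ₁ − 2θ₀ + θ₋₁) ) + (u₁² − u₋₁²)². Consequently 2u₀²(u₁ − u₋₁)² + (u₁² − u₋₁²)² ≤ |Ψ*S_xΨ|² + |Ψ*S_yΨ|² + |Ψ*S_zΨ|² ≤ 2u₀²(u₁ + u₋₁)²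 + (u₁² − u₋₁²)², with equality in the upper (resp. lower) bound if and only if u₀²u₁u₋₁(cos(θ₁ − 2θ₀ + θ₋₁) − 1) = 0 (resp. u₀²u₁u₋₁(cos(θ₁ − 2θ₀ + θ₋₁) + 1) = 0). -/
/-!
With `a = ψ̄₁ψ₀ + ψ̄₀ψ₋₁` one has `Ψ*SxΨ = √2 Re a`, `Ψ*SyΨ = √2 Im a` and
`Ψ*SzΨ = |ψ₁|² − |ψ₋₁|²`, so the left-hand side equals `2|a|² + (|ψ₁|² − |ψ₋₁|²)²` for
every `Ψ`. In polar form `a = u₀(u₁e^{i(θ₀−θ₁)} + u₋₁e^{i(θ₋₁−θ₀)})`, and the cosine of the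
phase difference of these two terms produces the identity. It differs from the upper and lower
bounds by `4u₀²u₁u₋₁(cos(θ₁−2θ₀+θ₋₁) ∓ 1)`, which has a fixed sign because `u₁, u₋₁ ≥ 0`.
-/

open Matrix ComplexConjugate

lemma norm_ofReal_div_sqrt_two_sq (r : ℝ) :
    ‖(r : ℂ) / (Real.sqrt 2 : ℂ)‖ ^ 2 = r ^ 2 / 2 := by
  rw [norm_div, Complex.norm_real, Complex.norm_real, div_pow, Real.norm_eq_abs, Real.norm_eq_abs,
    sq_abs, sq_abs, Real.sq_sqrt zero_le_two]

lemma conj_polar_mul_polar (u v s t : ℝ) :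
    conj ((u : ℂ) * Complex.exp (s * Complex.I)) * ((v : ℂ) * Complex.exp (t * Complex.I))
      = (u * v : ℝ) * Complex.exp ((t - s : ℝ) * Complex.I) := by
  rw [map_mul, Complex.conj_ofReal, ← Complex.exp_conj, map_mul, Complex.conj_ofReal,
    Complex.conj_I, mul_neg, Complex.exp_neg, Complex.ofReal_sub, sub_mul, Complex.exp_sub,
    Complex.ofReal_mul]
  ring

lemma norm_polar_sq (u t : ℝ) : ‖(u : ℂ) * Complex.exp (t * Complex.I)‖ ^ 2 = u ^ 2 := by
  rw [norm_mul, Complex.norm_exp_ofReal_mul_I, mul_one, Complex.norm_real, Real.norm_eq_abs, sq_abs]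

lemma norm_polar_add_polar_sq (r s α β : ℝ) :
    ‖(r : ℂ) * Complex.exp (α * Complex.I) + (s : ℂ) * Complex.exp (β * Complex.I)‖ ^ 2
      = r ^ 2 + s ^ 2 + 2 * r * s * Real.cos (α - β) := by
  rw [Complex.sq_norm, Complex.normSq_add, ← Complex.sq_norm, ← Complex.sq_norm, norm_polar_sq,
    norm_polar_sq, mul_comm (_ * _) (conj _), conj_polar_mul_polar, Complex.re_ofReal_mul,
    Complex.exp_ofReal_mul_I_re]
  ring

noncomputable def spinX : Matrix (Fin 3) (Fin 3) ℂ :=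
  (1 / (Real.sqrt 2 : ℂ)) • !![0, 1, 0; 1, 0, 1; 0, 1, 0]

noncomputable def spinY : Matrix (Fin 3) (Fin 3) ℂ :=
  (Complex.I / (Real.sqrt 2 : ℂ)) • !![0, -1, 0; 1, 0, -1; 0, 1, 0]

def spinZ : Matrix (Fin 3) (Fin 3) ℂ := !![1, 0, 0; 0, 0, 0; 0, 0, -1]

noncomputable def spinDensitySq (Ψ : Fin 3 → ℂ) : ℝ :=
  ‖star Ψ ⬝ᵥ spinX *ᵥ Ψ‖ ^ 2 + ‖star Ψ ⬝ᵥ spinY *ᵥ Ψ‖ ^ 2 + ‖star Ψ ⬝ᵥ spinZ *ᵥ Ψ‖ ^ 2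

/-- The components `Ψ 0, Ψ 1, Ψ 2` are `ψ₁, ψ₀, ψ₋₁`. -/
def transverseAmplitude (Ψ : Fin 3 → ℂ) : ℂ := conj (Ψ 0) * Ψ 1 + conj (Ψ 1) * Ψ 2

lemma star_dotProduct_spinX_mulVec (Ψ : Fin 3 → ℂ) :
    star Ψ ⬝ᵥ spinX *ᵥ Ψ
      = (transverseAmplitude Ψ + conj (transverseAmplitude Ψ)) / Real.sqrt 2 := by
  simp only [spinX, transverseAmplitude, map_add, map_mul, Complex.conj_conj, dotProduct,
    mulVec, Fin.sum_univ_three, Pi.star_apply, RCLike.star_def, Matrix.smul_apply, of_apply,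
    cons_val', cons_val_fin_one, cons_val_zero, cons_val_one, cons_val, smul_eq_mul]
  ring

lemma star_dotProduct_spinY_mulVec (Ψ : Fin 3 → ℂ) :
    star Ψ ⬝ᵥ spinY *ᵥ Ψ
      = -Complex.I * (transverseAmplitude Ψ - conj (transverseAmplitude Ψ)) / Real.sqrt 2 := by
  simp only [spinY, transverseAmplitude, map_add, map_mul, Complex.conj_conj, dotProduct,
    mulVec, Fin.sum_univ_three, Pi.star_apply, RCLike.star_def, Matrix.smul_apply, of_apply,
    cons_val', cons_val_fin_one, cons_val_zero, cons_val_one, cons_val, smul_eq_mul]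
  ring

lemma star_dotProduct_spinZ_mulVec (Ψ : Fin 3 → ℂ) :
    star Ψ ⬝ᵥ spinZ *ᵥ Ψ = ((‖Ψ 0‖ ^ 2 - ‖Ψ 2‖ ^ 2 : ℝ) : ℂ) := by
  simp only [spinZ, dotProduct, mulVec, Fin.sum_univ_three, Pi.star_apply, RCLike.star_def,
    of_apply, cons_val', cons_val_fin_one, cons_val_zero, cons_val_one, cons_val]
  push_cast
  rw [← Complex.conj_mul', ← Complex.conj_mul']
  ring

lemma norm_star_dotProduct_spinX_mulVec_sq (Ψ : Fin 3 → ℂ) :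
    ‖star Ψ ⬝ᵥ spinX *ᵥ Ψ‖ ^ 2 = 2 * (transverseAmplitude Ψ).re ^ 2 := by
  rw [star_dotProduct_spinX_mulVec, Complex.add_conj, norm_ofReal_div_sqrt_two_sq]
  ring

lemma norm_star_dotProduct_spinY_mulVec_sq (Ψ : Fin 3 → ℂ) :
    ‖star Ψ ⬝ᵥ spinY *ᵥ Ψ‖ ^ 2 = 2 * (transverseAmplitude Ψ).im ^ 2 := by
  set a := transverseAmplitude Ψ
  have h_real : star Ψ ⬝ᵥ spinY *ᵥ Ψ = ((2 * a.im : ℝ) : ℂ) / Real.sqrt 2 :=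
    calc star Ψ ⬝ᵥ spinY *ᵥ Ψ
        = ((2 * a.im : ℝ) : ℂ) * -(Complex.I * Complex.I) / Real.sqrt 2 := by
          rw [star_dotProduct_spinY_mulVec, Complex.sub_conj]; ring
      _ = _ := by rw [Complex.I_mul_I, neg_neg, mul_one]
  rw [h_real, norm_ofReal_div_sqrt_two_sq]
  ring

theorem spinDensitySq_eq (Ψ : Fin 3 → ℂ) :
    spinDensitySq Ψ = 2 * ‖transverseAmplitude Ψ‖ ^ 2 + (‖Ψ 0‖ ^ 2 - ‖Ψ 2‖ ^ 2) ^ 2 := by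
  rw [spinDensitySq, norm_star_dotProduct_spinX_mulVec_sq, norm_star_dotProduct_spinY_mulVec_sq,
    star_dotProduct_spinZ_mulVec, Complex.norm_real, Real.norm_eq_abs, sq_abs,
    Complex.sq_norm (transverseAmplitude Ψ), Complex.normSq_apply]
  ring

theorem spinDensitySq_polar (u1 u0 um1 t1 t0 tm1 : ℝ) (Ψ : Fin 3 → ℂ)
    (hΨ : Ψ = ![(u1 : ℂ) * Complex.exp (t1 * Complex.I),
      (u0 : ℂ) * Complex.exp (t0 * Complex.I), (um1 : ℂ) * Complex.exp (tm1 * Complex.I)]) :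
    spinDensitySq Ψ
      = 2 * u0 ^ 2 * (u1 ^ 2 + um1 ^ 2 + 2 * u1 * um1 * Real.cos (t1 - 2 * t0 + tm1))
        + (u1 ^ 2 - um1 ^ 2) ^ 2 := by
  have h_amp : transverseAmplitude Ψ
      = ((u1 * u0 : ℝ) : ℂ) * Complex.exp ((t0 - t1 : ℝ) * Complex.I)
        + ((u0 * um1 : ℝ) : ℂ) * Complex.exp ((tm1 - t0 : ℝ) * Complex.I) := by
    simp only [hΨ, transverseAmplitude, cons_val_zero, cons_val_one, cons_val_two, head_cons,
      tail_cons, conj_polar_mul_polar]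
  have h_phase : t0 - t1 - (tm1 - t0) = -(t1 - 2 * t0 + tm1) := by ring
  rw [spinDensitySq_eq, h_amp, norm_polar_add_polar_sq, h_phase, Real.cos_neg]
  simp only [hΨ, cons_val_zero, cons_val_two, tail_cons, head_cons, norm_polar_sq]
  ring

theorem spin_interaction_amplitude_reduction_general
    (u1 u0 um1 : ℝ) (hu1 : 0 ≤ u1) (hum1 : 0 ≤ um1)
    (t1 t0 tm1 : ℝ)
    (Ψ : Fin 3 → ℂ)
    (hΨ : Ψ = ![(u1 : ℂ) * Complex.exp (t1 * Complex.I),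
                (u0 : ℂ) * Complex.exp (t0 * Complex.I),
                (um1 : ℂ) * Complex.exp (tm1 * Complex.I)])
    (Sx Sy Sz : Matrix (Fin 3) (Fin 3) ℂ)
    (hSx : Sx = (1 / (Real.sqrt 2 : ℂ)) • !![0, 1, 0; 1, 0, 1; 0, 1, 0])
    (hSy : Sy = (Complex.I / (Real.sqrt 2 : ℂ)) • !![0, -1, 0; 1, 0, -1; 0, 1, 0])
    (hSz : Sz = !![1, 0, 0; 0, 0, 0; 0, 0, -1])
    (S : ℝ)
    (hS : S = ‖star Ψ ⬝ᵥ Sx.mulVec Ψ‖ ^ 2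
            + ‖star Ψ ⬝ᵥ Sy.mulVec Ψ‖ ^ 2
            + ‖star Ψ ⬝ᵥ Sz.mulVec Ψ‖ ^ 2) :
    S = 2 * u0 ^ 2 * (u1 ^ 2 + um1 ^ 2 + 2 * u1 * um1 * Real.cos (t1 - 2 * t0 + tm1))
        + (u1 ^ 2 - um1 ^ 2) ^ 2 ∧
    2 * u0 ^ 2 * (u1 - um1) ^ 2 + (u1 ^ 2 - um1 ^ 2) ^ 2 ≤ S ∧
    S ≤ 2 * u0 ^ 2 * (u1 + um1) ^ 2 + (u1 ^ 2 - um1 ^ 2) ^ 2 ∧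
    (S = 2 * u0 ^ 2 * (u1 + um1) ^ 2 + (u1 ^ 2 - um1 ^ 2) ^ 2 ↔
      u0 ^ 2 * u1 * um1 * (Real.cos (t1 - 2 * t0 + tm1) - 1) = 0) ∧
    (S = 2 * u0 ^ 2 * (u1 - um1) ^ 2 + (u1 ^ 2 - um1 ^ 2) ^ 2 ↔
      u0 ^ 2 * u1 * um1 * (Real.cos (t1 - 2 * t0 + tm1) + 1) = 0) := by
  have key : S = 2 * u0 ^ 2 * (u1 ^ 2 + um1 ^ 2 + 2 * u1 * um1 * Real.cos (t1 - 2 * t0 + tm1))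
      + (u1 ^ 2 - um1 ^ 2) ^ 2 := by
    rw [hS, hSx, hSy, hSz]
    exact spinDensitySq_polar u1 u0 um1 t1 t0 tm1 Ψ hΨ
  set c := Real.cos (t1 - 2 * t0 + tm1)
  have hp : 0 ≤ u0 ^ 2 * u1 * um1 := by positivity
  have h_upper : S = 2 * u0 ^ 2 * (u1 + um1) ^ 2 + (u1 ^ 2 - um1 ^ 2) ^ 2
      + 4 * (u0 ^ 2 * u1 * um1 * (c - 1)) := by rw [key]; ring
  have h_lower : S = 2 * u0 ^ 2 * (u1 - um1) ^ 2 + (u1 ^ 2 - um1 ^ 2) ^ 2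
      + 4 * (u0 ^ 2 * u1 * um1 * (c + 1)) := by rw [key]; ring
  have h_gap_upper : u0 ^ 2 * u1 * um1 * (c - 1) ≤ 0 :=
    mul_nonpos_of_nonneg_of_nonpos hp (sub_nonpos.2 (Real.cos_le_one _))
  have h_gap_lower : 0 ≤ u0 ^ 2 * u1 * um1 * (c + 1) :=
    mul_nonneg hp (by linarith [Real.neg_one_le_cos (t1 - 2 * t0 + tm1)])
  refine ⟨key, by linarith, by linarith, ?_, ?_⟩
  · rw [h_upper, add_eq_left, mul_eq_zero]; norm_num
  · rw [h_lower, add_eq_left, mul_eq_zero]; norm_num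

/-- For `Ψ = (u₁e^{iθ₁}, u₀e^{iθ₀}, u₋₁e^{iθ₋₁})` with `uⱼ ≥ 0` and the spin-1 Pauli
matrices `Sx, Sy, Sz`, one has
`|Ψ*SxΨ|² + |Ψ*SyΨ|² + |Ψ*SzΨ|²
  = 2u₀²(u₁² + u₋₁² + 2u₁u₋₁ cos(θ₁ − 2θ₀ + θ₋₁)) + (u₁² − u₋₁²)²`,
whence the two-sided bounds
`2u₀²(u₁−u₋₁)² + (u₁²−u₋₁²)² ≤ |Ψ*SΨ|² ≤ 2u₀²(u₁+u₋₁)² + (u₁²−u₋₁²)²`,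
with equality in the upper (resp. lower) bound iff
`u₀²u₁u₋₁(cos(θ₁−2θ₀+θ₋₁) − 1) = 0` (resp. `u₀²u₁u₋₁(cos(θ₁−2θ₀+θ₋₁) + 1) = 0`). -/
theorem spin_interaction_amplitude_reduction
    (u1 u0 um1 : ℝ) (hu1 : 0 ≤ u1) (hu0 : 0 ≤ u0) (hum1 : 0 ≤ um1)
    (t1 t0 tm1 : ℝ)
    (Ψ : Fin 3 → ℂ)
    (hΨ : Ψ = ![(u1 : ℂ) * Complex.exp (t1 * Complex.I),
                (u0 : ℂ) * Complex.exp (t0 * Complex.I),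
                (um1 : ℂ) * Complex.exp (tm1 * Complex.I)])
    (Sx Sy Sz : Matrix (Fin 3) (Fin 3) ℂ)
    (hSx : Sx = (1 / (Real.sqrt 2 : ℂ)) • !![0, 1, 0; 1, 0, 1; 0, 1, 0])
    (hSy : Sy = (Complex.I / (Real.sqrt 2 : ℂ)) • !![0, -1, 0; 1, 0, -1; 0, 1, 0])
    (hSz : Sz = !![1, 0, 0; 0, 0, 0; 0, 0, -1])
    (S : ℝ)
    (hS : S = ‖star Ψ ⬝ᵥ Sx.mulVec Ψ‖ ^ 2
            + ‖star Ψ ⬝ᵥ Sy.mulVec Ψ‖ ^ 2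
            + ‖star Ψ ⬝ᵥ Sz.mulVec Ψ‖ ^ 2) :
    S = 2 * u0 ^ 2 * (u1 ^ 2 + um1 ^ 2 + 2 * u1 * um1 * Real.cos (t1 - 2 * t0 + tm1))
        + (u1 ^ 2 - um1 ^ 2) ^ 2 ∧
    2 * u0 ^ 2 * (u1 - um1) ^ 2 + (u1 ^ 2 - um1 ^ 2) ^ 2 ≤ S ∧
    S ≤ 2 * u0 ^ 2 * (u1 + um1) ^ 2 + (u1 ^ 2 - um1 ^ 2) ^ 2 ∧
    (S = 2 * u0 ^ 2 * (u1 + um1) ^ 2 + (u1 ^ 2 - um1 ^ 2) ^ 2 ↔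
      u0 ^ 2 * u1 * um1 * (Real.cos (t1 - 2 * t0 + tm1) - 1) = 0) ∧
    (S = 2 * u0 ^ 2 * (u1 - um1) ^ 2 + (u1 ^ 2 - um1 ^ 2) ^ 2 ↔
      u0 ^ 2 * u1 * um1 * (Real.cos (t1 - 2 * t0 + tm1) + 1) = 0) :=
  spin_interaction_amplitude_reduction_general u1 u0 um1 hu1 hum1 t1 t0 tm1 Ψ hΨ Sx Sy Sz hSx hSy
    hSz S hS
end

section
/- Assume c_s < 0. Let γ = (γ₁, γ₀, γ₋₁) ∈ ℝ³ with γ_j ≥ 0 for each j, γ₁² + γ₀² + γ₋₁² = 1, and γ₁² − γ₋₁² = M/N, and let f : D → ℝ be a nonnegative C¹ function with ∫_D f² = N and with ‖∇f‖², Vf², f⁴ integrable on D. Then the triple γf = (γ₁ f, γ₀ f, γ₋₁ f) belongs to the admissible class 𝒜, and 𝔼[γf] = ∫_D ( ‖∇f‖² + Vf² ) dx + ( c_n + c_s P(γ) ) ∫_D f⁴ dx, where P(γ) = 2γ₀²(γ₁ + γ₋₁)² + M²/N². In particular 𝔼[γ* f] = ∫_D ( ‖∇f‖² + Vf² + (c_n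 + c_s) f⁴ ) dx for γ* = ((1 + M/N)/2, √((1 − M²/N²)/2), (1 − M/N)/2). -/
/-!
Every component of `γf` is a constant multiple of `f`, so each density in the energy is a
polynomial in `γ` times `‖∇f‖²`, `Vf²` or `f⁴`. The constraints `|γ|² = 1` and
`γ₁² − γ₋₁² = M/N` turn these polynomials into `1` and `P(γ)`, and for `γ⋆` one has
`2γ₀²(γ₁ + γ₋₁)² = 1 − M²/N²`, hence `P(γ⋆) = 1`.
-/

noncomputable section

open MeasureTheory

theorem gradient_const_mul_apply {F : Type*} [NormedAddCommGroup F] [InnerProductSpace ℝ F]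
    [CompleteSpace F] (c : ℝ) (f : F → ℝ) (x : F) :
    gradient (fun y => c * f y) x = c • gradient f x := by
  change (InnerProductSpace.toDual ℝ F).symm (fderiv ℝ (c • f) x) = _
  rw [fderiv_const_smul_field, Pi.smul_apply, map_smul]
  rfl

theorem norm_gradient_const_mul_sq {F : Type*} [NormedAddCommGroup F] [InnerProductSpace ℝ F]
    [CompleteSpace F] (c : ℝ) (f : F → ℝ) (x : F) :
    ‖gradient (fun y => c * f y) x‖ ^ 2 = c ^ 2 * ‖gradient f x‖ ^ 2 := by
  rw [gradient_const_mul_apply, norm_smul, mul_pow, Real.norm_eq_abs, sq_abs]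

theorem spinSign_of_neg {cs : ℝ} (hcs : cs < 0) : spinSign cs = 1 :=
  if_pos hcs

section SingleMode

variable {d : ℕ} {D : Set (Euc d)} {V : Euc d → ℝ} {cn cs N M : ℝ} {f : Euc d → ℝ}
  {a b c : ℝ}

theorem rho_const_mul (x : Euc d) :
    rho (fun x => a * f x) (fun x => b * f x) (fun x => c * f x) x
      = (a ^ 2 + b ^ 2 + c ^ 2) * f x ^ 2 := by
  unfold rho
  ring

theorem spinDen_const_mul (x : Euc d) :
    spinDen cs (fun x => a * f x) (fun x => b * f x) (fun x => c * f x) x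
      = (2 * b ^ 2 * (a + spinSign cs * c) ^ 2 + (a ^ 2 - c ^ 2) ^ 2) * f x ^ 4 := by
  unfold spinDen
  ring

theorem eDen_const_mul (x : Euc d) :
    eDen V cn cs (fun x => a * f x) (fun x => b * f x) (fun x => c * f x) x
      = (a ^ 2 + b ^ 2 + c ^ 2) * (‖gradient f x‖ ^ 2 + V x * f x ^ 2)
        + (cn * (a ^ 2 + b ^ 2 + c ^ 2) ^ 2
            + cs * (2 * b ^ 2 * (a + spinSign cs * c) ^ 2 + (a ^ 2 - c ^ 2) ^ 2)) * f x ^ 4 := by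
  simp only [eDen, norm_gradient_const_mul_sq, rho_const_mul, spinDen_const_mul]
  ring

variable (hgrad : IntegrableOn (fun x => ‖gradient f x‖ ^ 2) D)
  (hpot : IntegrableOn (fun x => V x * f x ^ 2) D) (hquart : IntegrableOn (fun x => f x ^ 4) D)
include hgrad hpot hquart

theorem energy_const_mul :
    Energy D V cn cs (fun x => a * f x) (fun x => b * f x) (fun x => c * f x)
      = (a ^ 2 + b ^ 2 + c ^ 2) * (∫ x in D, (‖gradient f x‖ ^ 2 + V x * f x ^ 2))
        + (cn * (a ^ 2 + b ^ 2 + c ^ 2) ^ 2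
            + cs * (2 * b ^ 2 * (a + spinSign cs * c) ^ 2 + (a ^ 2 - c ^ 2) ^ 2))
          * ∫ x in D, f x ^ 4 := by
  have hkin_pot : IntegrableOn (fun x => ‖gradient f x‖ ^ 2 + V x * f x ^ 2) D := hgrad.add hpot
  simp_rw [Energy, eDen_const_mul]
  rw [integral_add (hkin_pot.const_mul _) (hquart.const_mul _), integral_const_mul,
    integral_const_mul]

theorem admissible_const_mul (ha : 0 ≤ a) (hb : 0 ≤ b) (hc : 0 ≤ c)
    (hf0 : ∀ x ∈ D, 0 ≤ f x) (hfC : ContDiffOn ℝ 1 f D)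
    (hmass : (a ^ 2 + b ^ 2 + c ^ 2) * ∫ x in D, f x ^ 2 = N)
    (hmag : (a ^ 2 - c ^ 2) * ∫ x in D, f x ^ 2 = M) :
    Admissible D V cn cs N M (fun x => a * f x) (fun x => b * f x) (fun x => c * f x) := by
  have hrho_sq : ∀ x, rho (fun x => a * f x) (fun x => b * f x) (fun x => c * f x) x ^ 2
      = (a ^ 2 + b ^ 2 + c ^ 2) ^ 2 * f x ^ 4 := fun x => by rw [rho_const_mul]; ring
  refine ⟨fun x hx => mul_nonneg ha (hf0 x hx), fun x hx => mul_nonneg hb (hf0 x hx),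
    fun x hx => mul_nonneg hc (hf0 x hx), contDiffOn_const.mul hfC, contDiffOn_const.mul hfC,
    contDiffOn_const.mul hfC, ?_, ?_, ?_, ?_, ?_, ?_, ?_, ?_⟩
  · simpa only [IntegrableOn, norm_gradient_const_mul_sq] using hgrad.const_mul (a ^ 2)
  · simpa only [IntegrableOn, norm_gradient_const_mul_sq] using hgrad.const_mul (b ^ 2)
  · simpa only [IntegrableOn, norm_gradient_const_mul_sq] using hgrad.const_mul (c ^ 2)
  · simpa only [IntegrableOn, rho_const_mul, mul_left_comm (V _)] using
      hpot.const_mul (a ^ 2 + b ^ 2 + c ^ 2)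
  · simpa only [IntegrableOn, hrho_sq] using hquart.const_mul _
  · simpa only [IntegrableOn, spinDen_const_mul] using hquart.const_mul _
  · simp_rw [rho_const_mul]
    rwa [integral_const_mul]
  · simp_rw [mul_pow, ← sub_mul]
    rwa [integral_const_mul]

end SingleMode

theorem energy_of_single_mode_triple_general {d : ℕ}
    (D : Set (Euc d))
    (V : Euc d → ℝ)
    (cn cs N M : ℝ) (hN : 0 < N) (hM : |M| < N) (hcs : cs < 0)
    (γ1 γ0 γm1 : ℝ) (hγ1 : 0 ≤ γ1) (hγ0 : 0 ≤ γ0) (hγm1 : 0 ≤ γm1)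
    (hsum : γ1 ^ 2 + γ0 ^ 2 + γm1 ^ 2 = 1) (hdiff : γ1 ^ 2 - γm1 ^ 2 = M / N)
    (f : Euc d → ℝ) (hf0 : ∀ x ∈ D, 0 ≤ f x) (hfC : ContDiffOn ℝ 1 f D)
    (hint1 : IntegrableOn (fun x => ‖gradient f x‖ ^ 2) D)
    (hint2 : IntegrableOn (fun x => V x * (f x) ^ 2) D)
    (hint3 : IntegrableOn (fun x => (f x) ^ 4) D)
    (hmass : (∫ x in D, (f x) ^ 2) = N) :
    Admissible D V cn cs N M
      (fun x => γ1 * f x) (fun x => γ0 * f x) (fun x => γm1 * f x) ∧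
    Energy D V cn cs (fun x => γ1 * f x) (fun x => γ0 * f x) (fun x => γm1 * f x)
      = (∫ x in D, (‖gradient f x‖ ^ 2 + V x * (f x) ^ 2))
        + (cn + cs * (2 * γ0 ^ 2 * (γ1 + γm1) ^ 2 + M ^ 2 / N ^ 2))
          * ∫ x in D, (f x) ^ 4 ∧
    Energy D V cn cs
        (fun x => (1 + M / N) / 2 * f x)
        (fun x => Real.sqrt ((1 - M ^ 2 / N ^ 2) / 2) * f x)
        (fun x => (1 - M / N) / 2 * f x)
      = ∫ x in D,
          (‖gradient f x‖ ^ 2 + V x * (f x) ^ 2 + (cn + cs) * (f x) ^ 4) := by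
  have hspin := spinSign_of_neg hcs
  refine ⟨admissible_const_mul hint1 hint2 hint3 hγ1 hγ0 hγm1 hf0 hfC
    (by rw [hsum, hmass, one_mul]) (by rw [hdiff, hmass, div_mul_cancel₀ M hN.ne']), ?_, ?_⟩
  · rw [energy_const_mul hint1 hint2 hint3, hspin, hsum, hdiff, div_pow]
    ring
  · have hMN : M ^ 2 / N ^ 2 < 1 :=
      (div_lt_one (by positivity)).mpr (sq_lt_sq.mpr (by rwa [abs_of_pos hN]))
    have hkin_pot : IntegrableOn (fun x => ‖gradient f x‖ ^ 2 + V x * f x ^ 2) D :=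
      hint1.add hint2
    rw [energy_const_mul hint1 hint2 hint3, hspin, Real.sq_sqrt (by linarith), ← div_pow,
      integral_add hkin_pot (hint3.const_mul _), integral_const_mul]
    ring

/-- Energy of a single-mode triple (`c_s < 0`): if `γ = (γ₁, γ₀, γ₋₁) ≥ 0` satisfies
`γ₁² + γ₀² + γ₋₁² = 1` and `γ₁² − γ₋₁² = M/N`, and `f ∈ 𝒜ˢ`, then `γf ∈ 𝒜` and
`𝔼[γf] = ∫_D (‖∇f‖² + Vf²) + (c_n + c_s P(γ)) ∫_D f⁴`, where
`P(γ) = 2γ₀²(γ₁ + γ₋₁)² + M²/N²`. In particular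
`𝔼[γ⋆f] = ∫_D (‖∇f‖² + Vf² + (c_n + c_s)f⁴)` for
`γ⋆ = ((1 + M/N)/2, √((1 − M²/N²)/2), (1 − M/N)/2)`. -/
theorem energy_of_single_mode_triple {d : ℕ} (hd : 1 ≤ d)
    (D : Set (Euc d)) (hDopen : IsOpen D) (hDne : D.Nonempty) (hDconn : IsConnected D)
    (V : Euc d → ℝ) (hV : ContinuousOn V D)
    (cn cs N M : ℝ) (hN : 0 < N) (hM : |M| < N) (hcs : cs < 0)
    (γ1 γ0 γm1 : ℝ) (hγ1 : 0 ≤ γ1) (hγ0 : 0 ≤ γ0) (hγm1 : 0 ≤ γm1)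
    (hsum : γ1 ^ 2 + γ0 ^ 2 + γm1 ^ 2 = 1) (hdiff : γ1 ^ 2 - γm1 ^ 2 = M / N)
    (f : Euc d → ℝ) (hf0 : ∀ x ∈ D, 0 ≤ f x) (hfC : ContDiffOn ℝ 1 f D)
    (hint1 : IntegrableOn (fun x => ‖gradient f x‖ ^ 2) D)
    (hint2 : IntegrableOn (fun x => V x * (f x) ^ 2) D)
    (hint3 : IntegrableOn (fun x => (f x) ^ 4) D)
    (hmass : (∫ x in D, (f x) ^ 2) = N) :
    Admissible D V cn cs N M
      (fun x => γ1 * f x) (fun x => γ0 * f x) (fun x => γm1 * f x) ∧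
    Energy D V cn cs (fun x => γ1 * f x) (fun x => γ0 * f x) (fun x => γm1 * f x)
      = (∫ x in D, (‖gradient f x‖ ^ 2 + V x * (f x) ^ 2))
        + (cn + cs * (2 * γ0 ^ 2 * (γ1 + γm1) ^ 2 + M ^ 2 / N ^ 2))
          * ∫ x in D, (f x) ^ 4 ∧
    Energy D V cn cs
        (fun x => (1 + M / N) / 2 * f x)
        (fun x => Real.sqrt ((1 - M ^ 2 / N ^ 2) / 2) * f x)
        (fun x => (1 - M / N) / 2 * f x)
      = ∫ x in D,
          (‖gradient f x‖ ^ 2 + V x * (f x) ^ 2 + (cn + cs) * (f x) ^ 4) :=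
  energy_of_single_mode_triple_general D V cn cs N M hN hM hcs γ1 γ0 γm1 hγ1 hγ0 hγm1 hsum hdiff f
    hf0 hfC hint1 hint2 hint3 hmass
end
end
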